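/- arXiv:math/0502010 — 13 statements merged into one kernel-verified Lean document; each statement's English description precedes it below -/
import Mathlib

section
/- Let H be a complex inner product space, let a ∈ H be a unit vector, and let r₁, r₂ ∈ [-1,1]. Suppose the vectors x₁,…,xₙ ∈ H satisfy 0 ≤ r₁²‖x_k‖ ≤ Re⟨x_k, r₁ a⟩ and 0 ≤ r₂²‖x_k‖ ≤ Im⟨x_k, r₂ a⟩ for all k ∈ {1,…,n}. Then (r₁² + r₂²)^{1/2} · Σ_{k=1}^n ‖x_k‖ ≤ ‖Σ_{k=1}^n x_k‖. -/
/-!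
Combine the two hypotheses into one: with `c = r₁ - r₂ i` and `v = c • a`, each `x k` satisfies
`‖v‖² ‖x k‖ ≤ Re ⟪x k, v⟫`, where `‖v‖ = √(r₁² + r₂²)`. Summing over `k` and applying
Cauchy–Schwarz to `Re ⟪∑ x k, v⟫` gives `‖v‖² ∑ ‖x k‖ ≤ ‖v‖ ‖∑ x k‖`.
-/

open scoped InnerProductSpace

section RCLike

variable {𝕜 E ι : Type*} [RCLike 𝕜] [NormedAddCommGroup E] [InnerProductSpace 𝕜 E]

theorem mul_sum_norm_le_norm_sum_mul_of_le_re_inner (s : Finset ι) (x : ι → E) (v : E) (t : ℝ)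
    (h : ∀ k ∈ s, t * ‖x k‖ ≤ RCLike.re ⟪x k, v⟫_𝕜) :
    t * ∑ k ∈ s, ‖x k‖ ≤ ‖∑ k ∈ s, x k‖ * ‖v‖ :=
  calc t * ∑ k ∈ s, ‖x k‖ ≤ ∑ k ∈ s, RCLike.re ⟪x k, v⟫_𝕜 := by
        rw [Finset.mul_sum]; exact Finset.sum_le_sum h
    _ = RCLike.re ⟪∑ k ∈ s, x k, v⟫_𝕜 := by rw [sum_inner, map_sum]
    _ ≤ ‖∑ k ∈ s, x k‖ * ‖v‖ := re_inner_le_norm _ _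

theorem norm_mul_sum_norm_le_norm_sum_of_le_re_inner (s : Finset ι) (x : ι → E) (v : E)
    (h : ∀ k ∈ s, ‖v‖ ^ 2 * ‖x k‖ ≤ RCLike.re ⟪x k, v⟫_𝕜) :
    ‖v‖ * ∑ k ∈ s, ‖x k‖ ≤ ‖∑ k ∈ s, x k‖ := by
  rcases (norm_nonneg v).eq_or_lt with hv | hv
  · rw [← hv, zero_mul]; exact norm_nonneg _
  · have key := mul_sum_norm_le_norm_sum_mul_of_le_re_inner s x v _ h
    rw [sq, mul_assoc, mul_comm ‖∑ k ∈ s, x k‖] at key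
    exact le_of_mul_le_mul_left key hv

end RCLike

section Complex

open Complex

variable {H : Type*} [NormedAddCommGroup H] [InnerProductSpace ℂ H]

theorem re_inner_sub_mul_I_smul (x a : H) (r₁ r₂ : ℝ) :
    (⟪x, ((r₁ : ℂ) - r₂ * I) • a⟫_ℂ).re = (⟪x, r₁ • a⟫_ℂ).re + (⟪x, r₂ • a⟫_ℂ).im := by
  simp only [inner_smul_right, ← coe_smul, mul_re, sub_re, sub_im, ofReal_re,
    ofReal_im, mul_im, I_re, I_im]
  ring

theorem norm_sub_mul_I_smul_of_norm_eq_one {a : H} (ha : ‖a‖ = 1) (r₁ r₂ : ℝ) :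
    ‖((r₁ : ℂ) - r₂ * I) • a‖ = Real.sqrt (r₁ ^ 2 + r₂ ^ 2) := by
  rw [norm_smul, ha, mul_one, Complex.norm_def, normSq_apply]
  simp only [sub_re, sub_im, mul_re, mul_im, ofReal_re, ofReal_im, I_re, I_im]
  ring_nf

end Complex

theorem stmt_0_general {H : Type*} [NormedAddCommGroup H] [InnerProductSpace ℂ H]
    (a : H) (ha : ‖a‖ = 1) (r₁ r₂ : ℝ)
    (n : ℕ) (x : Fin n → H)
    (h₁ : ∀ k, 0 ≤ r₁ ^ 2 * ‖x k‖ ∧ r₁ ^ 2 * ‖x k‖ ≤ (inner ℂ (x k) (r₁ • a) : ℂ).re)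
    (h₂ : ∀ k, 0 ≤ r₂ ^ 2 * ‖x k‖ ∧ r₂ ^ 2 * ‖x k‖ ≤ (inner ℂ (x k) (r₂ • a) : ℂ).im) :
    Real.sqrt (r₁ ^ 2 + r₂ ^ 2) * ∑ k, ‖x k‖ ≤ ‖∑ k, x k‖ := by
  have hv := norm_sub_mul_I_smul_of_norm_eq_one ha r₁ r₂
  rw [← hv]
  refine norm_mul_sum_norm_le_norm_sum_of_le_re_inner (𝕜 := ℂ) _ x _ fun k _ => ?_
  rw [hv, Real.sq_sqrt (by positivity), RCLike.re_to_complex, re_inner_sub_mul_I_smul]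
  linarith [(h₁ k).2, (h₂ k).2]

theorem stmt_0 {H : Type*} [NormedAddCommGroup H] [InnerProductSpace ℂ H]
    (a : H) (ha : ‖a‖ = 1) (r₁ r₂ : ℝ)
    (hr₁ : r₁ ∈ Set.Icc (-1 : ℝ) 1) (hr₂ : r₂ ∈ Set.Icc (-1 : ℝ) 1)
    (n : ℕ) (x : Fin n → H)
    (h₁ : ∀ k, 0 ≤ r₁ ^ 2 * ‖x k‖ ∧ r₁ ^ 2 * ‖x k‖ ≤ (inner ℂ (x k) (r₁ • a) : ℂ).re)
    (h₂ : ∀ k, 0 ≤ r₂ ^ 2 * ‖x k‖ ∧ r₂ ^ 2 * ‖x k‖ ≤ (inner ℂ (x k) (r₂ • a) : ℂ).im) :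
    Real.sqrt (r₁ ^ 2 + r₂ ^ 2) * ∑ k, ‖x k‖ ≤ ‖∑ k, x k‖ :=
  stmt_0_general a ha r₁ r₂ n x h₁ h₂
end

section
/- Let H be a complex inner product space and a ∈ H a unit vector. Let x₁,…,xₙ ∈ H be nonzero vectors and set α = min_{1≤k≤n} ‖x_k‖. Suppose p₁, p₂ ∈ (0, √(α² + 1)) satisfy ‖x_k − a‖ ≤ p₁ and ‖x_k − i a‖ ≤ p₂ for all k ∈ {1,…,n}. Define α₁ = min_{1≤k≤n} (‖x_k‖² − p₁² + 1)/(2‖x_k‖) and α₂ = min_{1≤k≤n} (‖x_k‖² − p₂² + 1)/(2‖x_k‖). Then (α₁² + α₂²)^{1/2} · Σ_{k=1}^n ‖x_k‖ ≤ ‖Σ_{k=1}^n x_k‖. -/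
/-! Expanding `‖x - a‖² ≤ p²` with `‖a‖ = 1` gives `Re ⟪a, x⟫ ≥ (‖x‖² - p² + 1) / 2 ≥ α₁ ‖x‖`,
and the same with `i a` in place of `a` gives `Im ⟪a, x⟫ ≥ α₂ ‖x‖`; the bound on `p₁, p₂` makes
`α₁, α₂ ≥ 0`. Summing over `k`, the complex number `⟪a, ∑ x_k⟫` has real and imaginary parts at
least `α₁ ∑ ‖x_k‖` and `α₂ ∑ ‖x_k‖`, so its modulus is at least `√(α₁² + α₂²) ∑ ‖x_k‖`, while
Cauchy–Schwarz bounds it by `‖∑ x_k‖`. -/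

open scoped InnerProductSpace

theorem ciInf_div_mul_le {ι : Type*} [Finite ι] (f g : ι → ℝ) {k : ι} (hg : 0 < g k) :
    (⨅ i, f i / g i) * g k ≤ f k :=
  (le_div_iff₀ hg).1 (ciInf_le (Finite.bddBelow_range _) k)

theorem Complex.sqrt_sq_add_sq_mul_le_norm {z : ℂ} {c₁ c₂ t : ℝ} (hc₁ : 0 ≤ c₁) (hc₂ : 0 ≤ c₂)
    (ht : 0 ≤ t) (hre : c₁ * t ≤ z.re) (him : c₂ * t ≤ z.im) :
    √(c₁ ^ 2 + c₂ ^ 2) * t ≤ ‖z‖ := by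
  rw [Complex.norm_eq_sqrt_sq_add_sq, ← Real.sqrt_sq ht, ← Real.sqrt_mul (by positivity)]
  gcongr
  nlinarith [mul_nonneg hc₁ ht, mul_nonneg hc₂ ht]

section RCLike

variable {𝕜 E : Type*} [RCLike 𝕜] [NormedAddCommGroup E] [InnerProductSpace 𝕜 E]

theorem le_re_inner_of_norm_sub_le {a x : E} {p : ℝ} (h : ‖x - a‖ ≤ p) :
    (‖x‖ ^ 2 + ‖a‖ ^ 2 - p ^ 2) / 2 ≤ RCLike.re ⟪a, x⟫_𝕜 := by
  have hsq : ‖x - a‖ ^ 2 ≤ p ^ 2 := pow_le_pow_left₀ (norm_nonneg _) h 2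
  rw [norm_sub_sq (𝕜 := 𝕜), inner_re_symm] at hsq
  linarith

end RCLike

section Complex

variable {H : Type*} [NormedAddCommGroup H] [InnerProductSpace ℂ H]

theorem le_im_inner_of_norm_sub_I_smul_le {a x : H} {p : ℝ} (h : ‖x - Complex.I • a‖ ≤ p) :
    (‖x‖ ^ 2 + ‖a‖ ^ 2 - p ^ 2) / 2 ≤ (⟪a, x⟫_ℂ).im := by
  have := le_re_inner_of_norm_sub_le (𝕜 := ℂ) h
  simpa [norm_smul, inner_smul_left] using this

theorem sqrt_sq_add_sq_mul_sum_norm_le {ι : Type*} (s : Finset ι) (x : ι → H) {a : H}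
    (ha : ‖a‖ ≤ 1) {c₁ c₂ : ℝ} (hc₁ : 0 ≤ c₁) (hc₂ : 0 ≤ c₂)
    (hre : ∀ k, c₁ * ‖x k‖ ≤ (⟪a, x k⟫_ℂ).re) (him : ∀ k, c₂ * ‖x k‖ ≤ (⟪a, x k⟫_ℂ).im) :
    √(c₁ ^ 2 + c₂ ^ 2) * ∑ k ∈ s, ‖x k‖ ≤ ‖∑ k ∈ s, x k‖ := by
  have hsum : √(c₁ ^ 2 + c₂ ^ 2) * ∑ k ∈ s, ‖x k‖ ≤ ‖⟪a, ∑ k ∈ s, x k⟫_ℂ‖ := by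
    refine Complex.sqrt_sq_add_sq_mul_le_norm hc₁ hc₂ (by positivity) ?_ ?_
    · rw [inner_sum, Complex.re_sum, Finset.mul_sum]
      exact Finset.sum_le_sum fun k _ => hre k
    · rw [inner_sum, Complex.im_sum, Finset.mul_sum]
      exact Finset.sum_le_sum fun k _ => him k
  calc _ ≤ ‖⟪a, ∑ k ∈ s, x k⟫_ℂ‖ := hsum
    _ ≤ ‖a‖ * ‖∑ k ∈ s, x k‖ := norm_inner_le_norm _ _
    _ ≤ ‖∑ k ∈ s, x k‖ := mul_le_of_le_one_left (norm_nonneg _) ha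

end Complex

theorem stmt_2_general {H : Type*} [NormedAddCommGroup H] [InnerProductSpace ℂ H]
    (a : H) (ha : ‖a‖ = 1) (n : ℕ) (x : Fin n → H) (hx : ∀ k, x k ≠ 0)
    (α : ℝ) (hα : α = ⨅ k, ‖x k‖)
    (p₁ p₂ : ℝ) (hp₁ : p₁ ∈ Set.Ioo 0 (Real.sqrt (α ^ 2 + 1)))
    (hp₂ : p₂ ∈ Set.Ioo 0 (Real.sqrt (α ^ 2 + 1)))
    (h₁ : ∀ k, ‖x k - a‖ ≤ p₁) (h₂ : ∀ k, ‖x k - Complex.I • a‖ ≤ p₂)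
    (α₁ α₂ : ℝ)
    (hα₁ : α₁ = ⨅ k, (‖x k‖ ^ 2 - p₁ ^ 2 + 1) / (2 * ‖x k‖))
    (hα₂ : α₂ = ⨅ k, (‖x k‖ ^ 2 - p₂ ^ 2 + 1) / (2 * ‖x k‖)) :
    Real.sqrt (α₁ ^ 2 + α₂ ^ 2) * ∑ k, ‖x k‖ ≤ ‖∑ k, x k‖ := by
  have hx₂ : ∀ k, 0 < 2 * ‖x k‖ := fun k => by simp [hx k]
  have hterm_nonneg : ∀ p ∈ Set.Ioo 0 √(α ^ 2 + 1), ∀ k,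
      0 ≤ (‖x k‖ ^ 2 - p ^ 2 + 1) / (2 * ‖x k‖) := by
    rintro p ⟨hp, hpα⟩ k
    have hα_le : α ≤ ‖x k‖ := hα ▸ ciInf_le (Finite.bddBelow_range _) k
    have hα_nonneg : 0 ≤ α := hα ▸ Real.iInf_nonneg fun k => norm_nonneg (x k)
    have hp_sq := (Real.lt_sqrt hp.le).1 hpα
    exact div_nonneg (by nlinarith) (hx₂ k).le
  subst hα₁ hα₂
  refine sqrt_sq_add_sq_mul_sum_norm_le _ x ha.le (Real.iInf_nonneg (hterm_nonneg p₁ hp₁))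
    (Real.iInf_nonneg (hterm_nonneg p₂ hp₂)) (fun k => ?_) (fun k => ?_)
  · have hre : _ ≤ (⟪a, x k⟫_ℂ).re := le_re_inner_of_norm_sub_le (𝕜 := ℂ) (h₁ k)
    have hinf := ciInf_div_mul_le (fun i => ‖x i‖ ^ 2 - p₁ ^ 2 + 1) (fun i => 2 * ‖x i‖) (hx₂ k)
    rw [ha] at hre
    linarith
  · have him := le_im_inner_of_norm_sub_I_smul_le (h₂ k)
    have hinf := ciInf_div_mul_le (fun i => ‖x i‖ ^ 2 - p₂ ^ 2 + 1) (fun i => 2 * ‖x i‖) (hx₂ k)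
    rw [ha] at him
    linarith

theorem stmt_2 {H : Type*} [NormedAddCommGroup H] [InnerProductSpace ℂ H]
    (a : H) (ha : ‖a‖ = 1) (n : ℕ) (hn : 0 < n) (x : Fin n → H) (hx : ∀ k, x k ≠ 0)
    (α : ℝ) (hα : α = ⨅ k, ‖x k‖)
    (p₁ p₂ : ℝ) (hp₁ : p₁ ∈ Set.Ioo 0 (Real.sqrt (α ^ 2 + 1)))
    (hp₂ : p₂ ∈ Set.Ioo 0 (Real.sqrt (α ^ 2 + 1)))
    (h₁ : ∀ k, ‖x k - a‖ ≤ p₁) (h₂ : ∀ k, ‖x k - Complex.I • a‖ ≤ p₂)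
    (α₁ α₂ : ℝ)
    (hα₁ : α₁ = ⨅ k, (‖x k‖ ^ 2 - p₁ ^ 2 + 1) / (2 * ‖x k‖))
    (hα₂ : α₂ = ⨅ k, (‖x k‖ ^ 2 - p₂ ^ 2 + 1) / (2 * ‖x k‖)) :
    Real.sqrt (α₁ ^ 2 + α₂ ^ 2) * ∑ k, ‖x k‖ ≤ ‖∑ k, x k‖ :=
  stmt_2_general a ha n x hx α hα p₁ p₂ hp₁ hp₂ h₁ h₂ α₁ α₂ hα₁ hα₂
end

section
/- Let H be a complex inner product space and a ∈ H a unit vector. Let x₁,…,xₙ ∈ H be nonzero vectors and set α = min_{1≤k≤n} ‖x_k‖. Suppose p₁, p₂ ∈ (0, √(α² + 1)) satisfy ‖x_k − a‖ ≤ p₁ and ‖x_k − i a‖ ≤ p₂ for all k ∈ {1,…,n}. Define α₁ = min_{1≤k≤n} (‖x_k‖² − p₁² + 1)/(2‖x_k‖) and α₂ = min_{1≤k≤n} (‖x_k‖² − p₂² + 1)/(2‖x_k‖). Then equality (α₁² + α₂²)^{1/2} · Σ_{k=1}^n ‖x_k‖ = ‖Σ_{k=1}^n x_k‖ holds if and only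 if Σ_{k=1}^n x_k = (α₁ + i α₂) (Σ_{k=1}^n ‖x_k‖) a. -/
/-!
Expanding `‖x - a‖² ≤ p²` gives `Re ⟪x, a⟫ ≥ (‖x‖² - p² + 1) / 2 ≥ α₁ ‖x‖` for every `x = x_k`, and
likewise `Re ⟪x, i a⟫ ≥ α₂ ‖x‖`. With `c = α₁ + i α₂` and `s = ∑ x_k`, `S = ∑ ‖x_k‖`, summing yields
`Re ⟪s, c a⟫ ≥ |c|² S`. If moreover `‖s‖ = |c| S`, then
`‖s - S c a‖² = ‖s‖² - 2 S Re ⟪s, c a⟫ + S² |c|² ≤ 0`, so `s = S c a`; the converse is immediate.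
-/

open scoped ComplexInnerProductSpace

section InnerProductSpace

variable {𝕜 E : Type*} [RCLike 𝕜] [NormedAddCommGroup E] [InnerProductSpace 𝕜 E]

theorem norm_sq_add_norm_sq_sub_sq_div_two_le_re_inner {x a : E} {p : ℝ} (h : ‖x - a‖ ≤ p) :
    (‖x‖ ^ 2 + ‖a‖ ^ 2 - p ^ 2) / 2 ≤ RCLike.re (inner 𝕜 x a) := by
  have hsq : ‖x - a‖ ^ 2 ≤ p ^ 2 := pow_le_pow_left₀ (norm_nonneg _) h 2
  rw [norm_sub_sq (𝕜 := 𝕜)] at hsq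
  linarith

theorem mul_norm_le_re_inner_of_le_iInf {ι : Type*} [Finite ι] {x : ι → E} {a : E}
    (ha : ‖a‖ = 1) (hx : ∀ k, x k ≠ 0) {p β : ℝ} (hp : ∀ k, ‖x k - a‖ ≤ p)
    (hβ : β = ⨅ k, (‖x k‖ ^ 2 - p ^ 2 + 1) / (2 * ‖x k‖)) (k : ι) :
    β * ‖x k‖ ≤ RCLike.re (inner 𝕜 (x k) a) := by
  have hxk : 0 < 2 * ‖x k‖ := by have := norm_pos_iff.2 (hx k); positivity
  have hle : β ≤ (‖x k‖ ^ 2 - p ^ 2 + 1) / (2 * ‖x k‖) :=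
    hβ ▸ ciInf_le (Finite.bddBelow_range _) k
  rw [le_div_iff₀ hxk] at hle
  have := norm_sq_add_norm_sq_sub_sq_div_two_le_re_inner (𝕜 := 𝕜) (hp k)
  rw [ha] at this
  linarith

theorem mul_sum_norm_le_re_inner_sum {ι : Type*} (s : Finset ι) {x : ι → E} {v : E} {β : ℝ}
    (h : ∀ k, β * ‖x k‖ ≤ RCLike.re (inner 𝕜 (x k) v)) :
    β * ∑ k ∈ s, ‖x k‖ ≤ RCLike.re (inner 𝕜 (∑ k ∈ s, x k) v) := by
  rw [sum_inner, map_sum, Finset.mul_sum]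
  exact Finset.sum_le_sum fun k _ => h k

theorem eq_smul_of_norm_eq_of_le_re_inner {s v : E} {t : ℝ} (ht : 0 ≤ t)
    (hre : t * ‖v‖ ^ 2 ≤ RCLike.re (inner 𝕜 s v)) (hnorm : ‖s‖ = t * ‖v‖) : s = (t : 𝕜) • v := by
  have hsq : ‖s - (t : 𝕜) • v‖ ^ 2 ≤ 0 := by
    rw [norm_sub_sq (𝕜 := 𝕜), inner_smul_real_right, RCLike.smul_re, norm_smul, RCLike.norm_ofReal,
      abs_of_nonneg ht, hnorm]
    nlinarith
  exact sub_eq_zero.1 (norm_eq_zero.1 (by nlinarith [norm_nonneg (s - (t : 𝕜) • v)]))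

end InnerProductSpace

theorem sq_le_norm_sq_add_one {ι E : Type*} [Finite ι] [NormedAddCommGroup E] {x : ι → E}
    {α p : ℝ} (hα : α = ⨅ k, ‖x k‖) (hp₀ : 0 ≤ p) (hp : p < Real.sqrt (α ^ 2 + 1)) (k : ι) :
    p ^ 2 ≤ ‖x k‖ ^ 2 + 1 := by
  have hα0 : 0 ≤ α := hα ▸ Real.iInf_nonneg fun k => norm_nonneg _
  have hαk : α ≤ ‖x k‖ := hα ▸ ciInf_le (Finite.bddBelow_range _) k
  have hp2 := (Real.lt_sqrt hp₀).1 hp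
  nlinarith

theorem re_inner_ofReal_add_mul_I_smul {H : Type*} [NormedAddCommGroup H] [InnerProductSpace ℂ H]
    (s a : H) (u v : ℝ) :
    (⟪s, ((u : ℂ) + v * Complex.I) • a⟫).re = u * (⟪s, a⟫).re + v * (⟪s, Complex.I • a⟫).re := by
  simp only [inner_smul_right, add_mul, Complex.add_re, Complex.mul_re, Complex.ofReal_re,
    Complex.ofReal_im, Complex.I_re, Complex.I_im, Complex.mul_im]
  ring

theorem stmt_3_general {H : Type*} [NormedAddCommGroup H] [InnerProductSpace ℂ H]
    (a : H) (ha : ‖a‖ = 1) (n : ℕ) (x : Fin n → H) (hx : ∀ k, x k ≠ 0)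
    (α : ℝ) (hα : α = ⨅ k, ‖x k‖)
    (p₁ p₂ : ℝ) (hp₁ : p₁ ∈ Set.Ioo 0 (Real.sqrt (α ^ 2 + 1)))
    (hp₂ : p₂ ∈ Set.Ioo 0 (Real.sqrt (α ^ 2 + 1)))
    (h₁ : ∀ k, ‖x k - a‖ ≤ p₁) (h₂ : ∀ k, ‖x k - Complex.I • a‖ ≤ p₂)
    (α₁ α₂ : ℝ)
    (hα₁ : α₁ = ⨅ k, (‖x k‖ ^ 2 - p₁ ^ 2 + 1) / (2 * ‖x k‖))
    (hα₂ : α₂ = ⨅ k, (‖x k‖ ^ 2 - p₂ ^ 2 + 1) / (2 * ‖x k‖)) :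
    Real.sqrt (α₁ ^ 2 + α₂ ^ 2) * ∑ k, ‖x k‖ = ‖∑ k, x k‖ ↔
      ∑ k, x k = ((α₁ : ℂ) + α₂ * Complex.I) • ((∑ k, ‖x k‖ : ℝ) • a) := by
  have hIa : ‖Complex.I • a‖ = 1 := by rw [norm_smul, Complex.norm_I, one_mul, ha]
  have hα₁0 : 0 ≤ α₁ := hα₁ ▸ Real.iInf_nonneg fun k =>
    div_nonneg (by linarith [sq_le_norm_sq_add_one hα hp₁.1.le hp₁.2 k]) (by positivity)
  have hα₂0 : 0 ≤ α₂ := hα₂ ▸ Real.iInf_nonneg fun k =>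
    div_nonneg (by linarith [sq_le_norm_sq_add_one hα hp₂.1.le hp₂.2 k]) (by positivity)
  have hs₁ := mul_sum_norm_le_re_inner_sum (𝕜 := ℂ) Finset.univ
    (mul_norm_le_re_inner_of_le_iInf ha hx h₁ hα₁)
  have hs₂ := mul_sum_norm_le_re_inner_sum (𝕜 := ℂ) Finset.univ
    (mul_norm_le_re_inner_of_le_iInf hIa hx h₂ hα₂)
  have hS : 0 ≤ ∑ k, ‖x k‖ := Finset.sum_nonneg fun k _ => norm_nonneg _
  set c : ℂ := (α₁ : ℂ) + α₂ * Complex.I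
  have hca : ‖c • a‖ = Real.sqrt (α₁ ^ 2 + α₂ ^ 2) := by
    rw [norm_smul, ha, mul_one, Complex.norm_add_mul_I]
  have hca2 : ‖c • a‖ ^ 2 = α₁ ^ 2 + α₂ ^ 2 := by rw [hca, Real.sq_sqrt (by positivity)]
  rw [← hca, smul_comm]
  constructor
  · intro h
    rw [RCLike.real_smul_eq_coe_smul (K := ℂ)]
    refine eq_smul_of_norm_eq_of_le_re_inner (𝕜 := ℂ) hS ?_ (by rw [← h, mul_comm])
    rw [RCLike.re_to_complex, re_inner_ofReal_add_mul_I_smul, hca2]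
    simp only [RCLike.re_to_complex] at hs₁ hs₂
    linarith [mul_le_mul_of_nonneg_left hs₁ hα₁0, mul_le_mul_of_nonneg_left hs₂ hα₂0]
  · intro h
    rw [h, norm_smul _ (c • a), Real.norm_of_nonneg hS, mul_comm]

theorem stmt_3 {H : Type*} [NormedAddCommGroup H] [InnerProductSpace ℂ H]
    (a : H) (ha : ‖a‖ = 1) (n : ℕ) (hn : 0 < n) (x : Fin n → H) (hx : ∀ k, x k ≠ 0)
    (α : ℝ) (hα : α = ⨅ k, ‖x k‖)
    (p₁ p₂ : ℝ) (hp₁ : p₁ ∈ Set.Ioo 0 (Real.sqrt (α ^ 2 + 1)))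
    (hp₂ : p₂ ∈ Set.Ioo 0 (Real.sqrt (α ^ 2 + 1)))
    (h₁ : ∀ k, ‖x k - a‖ ≤ p₁) (h₂ : ∀ k, ‖x k - Complex.I • a‖ ≤ p₂)
    (α₁ α₂ : ℝ)
    (hα₁ : α₁ = ⨅ k, (‖x k‖ ^ 2 - p₁ ^ 2 + 1) / (2 * ‖x k‖))
    (hα₂ : α₂ = ⨅ k, (‖x k‖ ^ 2 - p₂ ^ 2 + 1) / (2 * ‖x k‖)) :
    Real.sqrt (α₁ ^ 2 + α₂ ^ 2) * ∑ k, ‖x k‖ = ‖∑ k, x k‖ ↔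
      ∑ k, x k = ((α₁ : ℂ) + α₂ * Complex.I) • ((∑ k, ‖x k‖ : ℝ) • a) :=
  stmt_3_general a ha n x hx α hα p₁ p₂ hp₁ hp₂ h₁ h₂ α₁ α₂ hα₁ hα₂
end

section
/- Let H be a complex inner product space and a ∈ H a unit vector. Suppose the nonzero vectors x₁,…,xₙ ∈ H satisfy ‖x_k − a‖ ≤ 1 and ‖x_k − i a‖ ≤ 1 for all k ∈ {1,…,n}, and let α = min_{1≤k≤n} ‖x_k‖. Then (α/√2) · Σ_{k=1}^n ‖x_k‖ ≤ ‖Σ_{k=1}^n x_k‖. -/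
/-!
Put `b = a + i a`, so `‖b‖ = √2`. Expanding `‖x - a‖² ≤ ‖a‖²` gives `‖x‖² ≤ 2 Re ⟪x, a⟫`, and
likewise for `i a`; adding, `α ‖x_k‖ ≤ ‖x_k‖² ≤ Re ⟪x_k, b⟫`. Summing over `k` and applying
Cauchy–Schwarz to `Re ⟪∑ x_k, b⟫` yields `α ∑ ‖x_k‖ ≤ √2 ‖∑ x_k‖`.
-/

open scoped InnerProductSpace

section RCLike

variable {𝕜 E : Type*} [RCLike 𝕜] [NormedAddCommGroup E] [InnerProductSpace 𝕜 E]

local notation "⟪" x ", " y "⟫" => inner 𝕜 x y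

theorem sq_norm_le_two_mul_re_inner_of_norm_sub_le {x u : E} (h : ‖x - u‖ ≤ ‖u‖) :
    ‖x‖ ^ 2 ≤ 2 * RCLike.re ⟪x, u⟫ := by
  have hsq : ‖x - u‖ ^ 2 ≤ ‖u‖ ^ 2 := pow_le_pow_left₀ (norm_nonneg _) h 2
  rw [norm_sub_sq (𝕜 := 𝕜)] at hsq
  linarith

theorem mul_sum_norm_le_norm_mul_norm_sum {ι : Type*} (s : Finset ι) (x : ι → E) (b : E)
    (c : ℝ) (h : ∀ k ∈ s, c * ‖x k‖ ≤ RCLike.re ⟪x k, b⟫) :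
    c * ∑ k ∈ s, ‖x k‖ ≤ ‖b‖ * ‖∑ k ∈ s, x k‖ :=
  calc c * ∑ k ∈ s, ‖x k‖ ≤ ∑ k ∈ s, RCLike.re ⟪x k, b⟫ := by
        rw [Finset.mul_sum]; exact Finset.sum_le_sum h
    _ = RCLike.re ⟪∑ k ∈ s, x k, b⟫ := by rw [sum_inner, map_sum]
    _ ≤ ‖⟪∑ k ∈ s, x k, b⟫‖ := RCLike.re_le_norm _
    _ ≤ ‖b‖ * ‖∑ k ∈ s, x k‖ := by rw [mul_comm]; exact norm_inner_le_norm _ _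

end RCLike

theorem norm_add_I_smul {H : Type*} [NormedAddCommGroup H] [InnerProductSpace ℂ H] (a : H) :
    ‖a + Complex.I • a‖ = Real.sqrt 2 * ‖a‖ := by
  have hnorm : ‖(1 + Complex.I : ℂ)‖ = Real.sqrt 2 := by
    simp [Complex.norm_def, Complex.normSq_apply]
    norm_num
  rw [← hnorm, ← norm_smul, add_smul, one_smul]

theorem stmt_4_general {H : Type*} [NormedAddCommGroup H] [InnerProductSpace ℂ H]
    (a : H) (ha : ‖a‖ = 1) (n : ℕ) (x : Fin n → H)
    (h₁ : ∀ k, ‖x k - a‖ ≤ 1) (h₂ : ∀ k, ‖x k - Complex.I • a‖ ≤ 1)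
    (α : ℝ) (hα : α = ⨅ k, ‖x k‖) :
    (α / Real.sqrt 2) * ∑ k, ‖x k‖ ≤ ‖∑ k, x k‖ := by
  have hIa : ‖Complex.I • a‖ = 1 := by rw [norm_smul, ha, Complex.norm_I, one_mul]
  have hα_le : ∀ k, α ≤ ‖x k‖ := fun k =>
    hα ▸ ciInf_le ⟨0, Set.forall_mem_range.2 fun _ => norm_nonneg _⟩ k
  have hpoint : ∀ k ∈ Finset.univ, α * ‖x k‖ ≤
      RCLike.re (inner ℂ (x k) (a + Complex.I • a)) := by
    intro k _
    have ha' := sq_norm_le_two_mul_re_inner_of_norm_sub_le (𝕜 := ℂ) (ha ▸ h₁ k)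
    have hIa' := sq_norm_le_two_mul_re_inner_of_norm_sub_le (𝕜 := ℂ) (hIa ▸ h₂ k)
    rw [inner_add_right, map_add]
    nlinarith [hα_le k, norm_nonneg (x k)]
  have hsum := mul_sum_norm_le_norm_mul_norm_sum Finset.univ x _ α hpoint
  rw [norm_add_I_smul, ha, mul_one] at hsum
  rw [div_mul_eq_mul_div, div_le_iff₀ (by positivity), mul_comm ‖_‖]
  exact hsum

theorem stmt_4 {H : Type*} [NormedAddCommGroup H] [InnerProductSpace ℂ H]
    (a : H) (ha : ‖a‖ = 1) (n : ℕ) (hn : 0 < n) (x : Fin n → H) (hx : ∀ k, x k ≠ 0)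
    (h₁ : ∀ k, ‖x k - a‖ ≤ 1) (h₂ : ∀ k, ‖x k - Complex.I • a‖ ≤ 1)
    (α : ℝ) (hα : α = ⨅ k, ‖x k‖) :
    (α / Real.sqrt 2) * ∑ k, ‖x k‖ ≤ ‖∑ k, x k‖ :=
  stmt_4_general a ha n x h₁ h₂ α hα
end

section
/- Let H be a complex inner product space and let a₁,…,a_m ∈ H be orthonormal vectors. Let r_t, ρ_t ∈ ℝ for t ∈ {1,…,m}, and suppose the vectors x₁,…,xₙ ∈ H satisfy 0 ≤ r_t²‖x_k‖ ≤ Re⟨x_k, r_t a_t⟩ and 0 ≤ ρ_t²‖x_k‖ ≤ Im⟨x_k, ρ_t a_t⟩ for all k ∈ {1,…,n} and all t ∈ {1,…,m}. Then (Σ_{t=1}^m (r_t² + ρ_t²))^{1/2} · Σ_{k=1}^n ‖x_k‖ ≤ ‖Σ_{k=1}^n x_k‖. -/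
/-!
Summing the hypotheses over `k` gives `r_t² s ≤ r_t Re⟨S, a_t⟩` and `ρ_t² s ≤ ρ_t Im⟨S, a_t⟩`,
where `S = ∑ x_k` and `s = ∑ ‖x_k‖`. For `v = ∑ (r_t - iρ_t) a_t` these add up to
`‖v‖² s ≤ Re⟨S, v⟩ ≤ ‖S‖ ‖v‖`, and `‖v‖² = ∑ (r_t² + ρ_t²)` by orthonormality.
-/

open Finset RCLike

section

variable {𝕜 E ι : Type*} [RCLike 𝕜] [NormedAddCommGroup E] [InnerProductSpace 𝕜 E]

theorem Orthonormal.norm_sum_smul_sq {v : ι → E} (hv : Orthonormal 𝕜 v) (l : ι → 𝕜)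
    (s : Finset ι) : ‖∑ i ∈ s, l i • v i‖ ^ 2 = ∑ i ∈ s, ‖l i‖ ^ 2 := by
  have h := hv.inner_sum l l s
  simp only [inner_self_eq_norm_sq_to_K, RCLike.conj_mul] at h
  exact_mod_cast h

theorem mul_sum_norm_le_map_inner_sum (f : 𝕜 →+ ℝ) (s : Finset ι) (x : ι → E) (y : E) (c : ℝ)
    (h : ∀ k ∈ s, c * ‖x k‖ ≤ f (inner 𝕜 (x k) y)) :
    c * ∑ k ∈ s, ‖x k‖ ≤ f (inner 𝕜 (∑ k ∈ s, x k) y) := by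
  rw [sum_inner, map_sum, mul_sum]
  exact sum_le_sum h

theorem mul_le_norm_of_sq_mul_le_re_inner {x v : E} {s : ℝ}
    (h : ‖v‖ ^ 2 * s ≤ re (inner 𝕜 x v)) : ‖v‖ * s ≤ ‖x‖ := by
  rcases (norm_nonneg v).eq_or_lt with hv | hv
  · rw [← hv, zero_mul]
    exact norm_nonneg x
  · refine le_of_mul_le_mul_left ?_ hv
    calc ‖v‖ * (‖v‖ * s) = ‖v‖ ^ 2 * s := by ring
      _ ≤ re (inner 𝕜 x v) := h
      _ ≤ ‖x‖ * ‖v‖ := re_inner_le_norm x v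
      _ = ‖v‖ * ‖x‖ := mul_comm _ _

end

theorem stmt_6 {H : Type*} [NormedAddCommGroup H] [InnerProductSpace ℂ H]
    (m : ℕ) (a : Fin m → H) (ha : Orthonormal ℂ a) (r ρ : Fin m → ℝ)
    (n : ℕ) (x : Fin n → H)
    (h₁ : ∀ k t, 0 ≤ r t ^ 2 * ‖x k‖ ∧ r t ^ 2 * ‖x k‖ ≤ (inner ℂ (x k) (r t • a t) : ℂ).re)
    (h₂ : ∀ k t, 0 ≤ ρ t ^ 2 * ‖x k‖ ∧ ρ t ^ 2 * ‖x k‖ ≤ (inner ℂ (x k) (ρ t • a t) : ℂ).im) :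
    Real.sqrt (∑ t, (r t ^ 2 + ρ t ^ 2)) * ∑ k, ‖x k‖ ≤ ‖∑ k, x k‖ := by
  have inner_real_smul (y : H) (c : ℝ) (t : Fin m) :
      inner ℂ y (c • a t) = c • inner ℂ y (a t) := by
    rw [RCLike.real_smul_eq_coe_smul (K := ℂ), inner_smul_real_right]
  have hre t : r t ^ 2 * ∑ k, ‖x k‖ ≤ r t * (inner ℂ (∑ k, x k) (a t)).re := by
    have := mul_sum_norm_le_map_inner_sum Complex.reAddGroupHom univ x (r t • a t) _
      fun k _ ↦ (h₁ k t).2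
    simpa [inner_real_smul] using this
  have him t : ρ t ^ 2 * ∑ k, ‖x k‖ ≤ ρ t * (inner ℂ (∑ k, x k) (a t)).im := by
    have := mul_sum_norm_le_map_inner_sum Complex.imAddGroupHom univ x (ρ t • a t) _
      fun k _ ↦ (h₂ k t).2
    simpa [inner_real_smul] using this
  set v := ∑ t, (starRingEnd ℂ) ⟨r t, ρ t⟩ • a t
  have hv : ‖v‖ ^ 2 = ∑ t, (r t ^ 2 + ρ t ^ 2) := by
    simp [v, ha.norm_sum_smul_sq, Complex.sq_norm, Complex.normSq_mk, ← sq]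
  have key : ‖v‖ ^ 2 * ∑ k, ‖x k‖ ≤ re (inner ℂ (∑ k, x k) v) := by
    simp only [hv, v, inner_sum, inner_smul_right, re_to_complex, Complex.re_sum, sum_mul]
    refine sum_le_sum fun t _ ↦ ?_
    simp only [Complex.mul_re, Complex.conj_re, Complex.conj_im, add_mul]
    linarith [hre t, him t]
  simpa [← hv, Real.sqrt_sq (norm_nonneg v)] using mul_le_norm_of_sq_mul_le_re_inner key
end

section
/- Let H be a real or complex inner product space and let a₁,…,a_m ∈ H be orthonormal vectors. Let r_t ∈ ℝ for t ∈ {1,…,m}, and suppose the vectors x₁,…,xₙ ∈ H satisfy 0 ≤ r_t²‖x_k‖ ≤ Re⟨x_k, r_t a_t⟩ for all k ∈ {1,…,n} and all t ∈ {1,…,m}. Then (Σ_{t=1}^m r_t²)^{1/2} · Σ_{k=1}^n ‖x_k‖ ≤ ‖Σ_{k=1}^n x_k‖. -/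
/-!
Put `y = ∑ r_t a_t`. Orthonormality gives `‖y‖ = √(∑ r_t²)`, and summing the hypothesis over `t`
gives `‖y‖² ‖x_k‖ ≤ Re ⟪x_k, y⟫`. Summing over `k` and applying Cauchy–Schwarz,
`‖y‖² ∑ ‖x_k‖ ≤ Re ⟪∑ x_k, y⟫ ≤ ‖∑ x_k‖ ‖y‖`; divide by `‖y‖` (the case `y = 0` is trivial).
-/

open Finset RCLike

section

variable {𝕜 E ι : Type*} [RCLike 𝕜] [NormedAddCommGroup E] [InnerProductSpace 𝕜 E]

theorem Orthonormal.norm_sum_ofReal_smul {v : ι → E} (hv : Orthonormal 𝕜 v) (r : ι → ℝ)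
    (s : Finset ι) : ‖∑ i ∈ s, (r i : 𝕜) • v i‖ = √(∑ i ∈ s, r i ^ 2) := by
  rw [← Real.sqrt_sq (norm_nonneg _), hv.norm_sum_smul_sq]
  simp only [norm_ofReal, sq_abs]

theorem norm_mul_sum_norm_le_norm_sum (s : Finset ι) (x : ι → E) (y : E)
    (h : ∀ k ∈ s, ‖y‖ ^ 2 * ‖x k‖ ≤ re (inner 𝕜 (x k) y)) :
    ‖y‖ * ∑ k ∈ s, ‖x k‖ ≤ ‖∑ k ∈ s, x k‖ := by
  have key : ‖y‖ * (‖y‖ * ∑ k ∈ s, ‖x k‖) ≤ ‖y‖ * ‖∑ k ∈ s, x k‖ :=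
    calc ‖y‖ * (‖y‖ * ∑ k ∈ s, ‖x k‖) = ∑ k ∈ s, ‖y‖ ^ 2 * ‖x k‖ := by
          rw [← mul_assoc, ← sq, mul_sum]
      _ ≤ ∑ k ∈ s, re (inner 𝕜 (x k) y) := sum_le_sum h
      _ = re (inner 𝕜 (∑ k ∈ s, x k) y) := by rw [sum_inner, map_sum]
      _ ≤ ‖∑ k ∈ s, x k‖ * ‖y‖ := re_inner_le_norm _ _
      _ = ‖y‖ * ‖∑ k ∈ s, x k‖ := mul_comm _ _
  rcases (norm_nonneg y).eq_or_lt with hy | hy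
  · simp [← hy]
  · exact le_of_mul_le_mul_left key hy

end

theorem stmt_8 {𝕜 H : Type*} [RCLike 𝕜] [NormedAddCommGroup H] [InnerProductSpace 𝕜 H]
    (m : ℕ) (a : Fin m → H) (ha : Orthonormal 𝕜 a) (r : Fin m → ℝ)
    (n : ℕ) (x : Fin n → H)
    (h : ∀ k t, 0 ≤ r t ^ 2 * ‖x k‖ ∧
      r t ^ 2 * ‖x k‖ ≤ RCLike.re (inner 𝕜 (x k) (((r t : ℝ) : 𝕜) • a t) : 𝕜)) :
    Real.sqrt (∑ t, r t ^ 2) * ∑ k, ‖x k‖ ≤ ‖∑ k, x k‖ := by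
  rw [← ha.norm_sum_ofReal_smul r]
  refine norm_mul_sum_norm_le_norm_sum (𝕜 := 𝕜) _ x _ fun k _ => ?_
  calc ‖∑ t, (r t : 𝕜) • a t‖ ^ 2 * ‖x k‖ = ∑ t, r t ^ 2 * ‖x k‖ := by
        rw [ha.norm_sum_ofReal_smul, Real.sq_sqrt (sum_nonneg fun t _ => sq_nonneg _), sum_mul]
    _ ≤ ∑ t, re (inner 𝕜 (x k) ((r t : 𝕜) • a t)) := sum_le_sum fun t _ => (h k t).2
    _ = re (inner 𝕜 (x k) (∑ t, (r t : 𝕜) • a t)) := by rw [inner_sum, map_sum]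
end

section
/- Let H be a complex inner product space and let a₁,…,a_m ∈ H be orthonormal vectors. Let x₁,…,xₙ ∈ H be nonzero vectors and set α = min_{1≤k≤n} ‖x_k‖. Suppose for each t ∈ {1,…,m} that p_t, q_t ∈ (0, √(α² + 1)) satisfy ‖x_k − a_t‖ ≤ p_t and ‖x_k − i a_t‖ ≤ q_t for all k ∈ {1,…,n}. Define α_t = min_{1≤k≤n} (‖x_k‖² − p_t² + 1)/(2‖x_k‖) and β_t = min_{1≤k≤n} (‖x_k‖² − q_t² + 1)/(2‖x_k‖). Then (Σ_{t=1}^m (α_t² + β_t²))^{1/2} · Σ_{k=1}^n ‖x_k‖ ≤ ‖Σ_{k=1}^n x_k‖. -/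
/-!
Expanding `‖x_k - a_t‖² ≤ p_t²` gives `α_t ‖x_k‖ ≤ Re ⟪x_k, a_t⟫`, and likewise with `i a_t`
gives `β_t ‖x_k‖ ≤ -Im ⟪x_k, a_t⟫`. Summing over `k`, both the real and the imaginary part of
`⟪∑ x_k, a_t⟫` are bounded below by multiples of `∑ ‖x_k‖`, with factors that are nonnegative
because `p_t, q_t < √(α² + 1)`. Hence
`(α_t² + β_t²) (∑ ‖x_k‖)² ≤ |⟪a_t, ∑ x_k⟫|²`, and Bessel's inequality sums this over `t`.
-/

open scoped InnerProductSpace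

section RCLike

variable {𝕜 E : Type*} [RCLike 𝕜] [SeminormedAddCommGroup E] [InnerProductSpace 𝕜 E]

lemma re_inner_ge_of_norm_sub_le {x b : E} {r : ℝ} (hb : ‖b‖ = 1) (h : ‖x - b‖ ≤ r) :
    (‖x‖ ^ 2 - r ^ 2 + 1) / 2 ≤ RCLike.re ⟪x, b⟫_𝕜 := by
  have hsq : ‖x - b‖ ^ 2 ≤ r ^ 2 := pow_le_pow_left₀ (norm_nonneg _) h 2
  rw [@norm_sub_sq 𝕜, hb] at hsq
  linarith

lemma mul_norm_le_re_inner_of_le_div {x b : E} {r c : ℝ} (hb : ‖b‖ = 1) (h : ‖x - b‖ ≤ r)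
    (hc : c ≤ (‖x‖ ^ 2 - r ^ 2 + 1) / (2 * ‖x‖)) : c * ‖x‖ ≤ RCLike.re ⟪x, b⟫_𝕜 := by
  rcases (norm_nonneg x).eq_or_lt with hx | hx
  · have : ‖⟪x, b⟫_𝕜‖ ≤ 0 := by simpa [← hx] using norm_inner_le_norm (𝕜 := 𝕜) x b
    rw [← hx, mul_zero]
    linarith [(abs_le.1 (RCLike.abs_re_le_norm ⟪x, b⟫_𝕜)).1]
  calc c * ‖x‖ ≤ (‖x‖ ^ 2 - r ^ 2 + 1) / (2 * ‖x‖) * ‖x‖ := mul_le_mul_of_nonneg_right hc hx.le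
    _ = (‖x‖ ^ 2 - r ^ 2 + 1) / 2 := by field_simp
    _ ≤ RCLike.re ⟪x, b⟫_𝕜 := re_inner_ge_of_norm_sub_le hb h

lemma iInf_mul_sum_norm_le_re_inner_sum {ι : Type*} [Fintype ι] (x : ι → E) {b : E} {r : ℝ}
    (hb : ‖b‖ = 1) (h : ∀ k, ‖x k - b‖ ≤ r) :
    (⨅ k, (‖x k‖ ^ 2 - r ^ 2 + 1) / (2 * ‖x k‖)) * ∑ k, ‖x k‖ ≤ RCLike.re ⟪∑ k, x k, b⟫_𝕜 := by
  rw [Finset.mul_sum, sum_inner, map_sum]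
  exact Finset.sum_le_sum fun k _ =>
    mul_norm_le_re_inner_of_le_div hb (h k) (ciInf_le (Finite.bddBelow_range _) k)

end RCLike

lemma iInf_div_nonneg_of_lt_sqrt {ι : Type*} {ν : ι → ℝ} (hν : ∀ k, 0 ≤ ν k) {r : ℝ}
    (hr : r ∈ Set.Ioo 0 √((⨅ k, ν k) ^ 2 + 1)) :
    0 ≤ ⨅ k, (ν k ^ 2 - r ^ 2 + 1) / (2 * ν k) := by
  refine Real.iInf_nonneg fun k => div_nonneg ?_ (by linarith [hν k])
  have hinf : 0 ≤ ⨅ k, ν k := Real.iInf_nonneg hν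
  have hle : ⨅ k, ν k ≤ ν k := ciInf_le ⟨0, Set.forall_mem_range.2 hν⟩ k
  have hr2 : r ^ 2 < (⨅ k, ν k) ^ 2 + 1 := (Real.lt_sqrt hr.1.le).1 hr.2
  nlinarith

lemma Complex.sq_add_sq_le_sq_norm {z : ℂ} {u v : ℝ} (hu : 0 ≤ u) (hv : 0 ≤ v)
    (hre : u ≤ z.re) (him : v ≤ -z.im) : u ^ 2 + v ^ 2 ≤ ‖z‖ ^ 2 := by
  rw [Complex.sq_norm, Complex.normSq_apply]
  nlinarith

lemma Complex.re_inner_I_smul {E : Type*} [SeminormedAddCommGroup E] [InnerProductSpace ℂ E]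
    (x y : E) : (⟪x, Complex.I • y⟫_ℂ).re = -(⟪x, y⟫_ℂ).im := by
  simp [inner_smul_right]

lemma Real.sqrt_mul_le_of_mul_sq_le {T S N : ℝ} (hS : 0 ≤ S) (hN : 0 ≤ N) (h : T * S ^ 2 ≤ N ^ 2) :
    √T * S ≤ N := by
  rcases le_total T 0 with hT | hT
  · rw [Real.sqrt_eq_zero'.2 hT, zero_mul]; exact hN
  rw [← pow_le_pow_iff_left₀ (by positivity) hN two_ne_zero, mul_pow, Real.sq_sqrt hT]
  exact h

theorem stmt_9_general {H : Type*} [NormedAddCommGroup H] [InnerProductSpace ℂ H]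
    (m : ℕ) (a : Fin m → H) (ha : Orthonormal ℂ a)
    (n : ℕ) (x : Fin n → H)
    (α : ℝ) (hα : α = ⨅ k, ‖x k‖)
    (p q : Fin m → ℝ)
    (hp : ∀ t, p t ∈ Set.Ioo 0 (Real.sqrt (α ^ 2 + 1)))
    (hq : ∀ t, q t ∈ Set.Ioo 0 (Real.sqrt (α ^ 2 + 1)))
    (h₁ : ∀ k t, ‖x k - a t‖ ≤ p t) (h₂ : ∀ k t, ‖x k - Complex.I • a t‖ ≤ q t)
    (α' β : Fin m → ℝ)
    (hα' : ∀ t, α' t = ⨅ k, (‖x k‖ ^ 2 - p t ^ 2 + 1) / (2 * ‖x k‖))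
    (hβ : ∀ t, β t = ⨅ k, (‖x k‖ ^ 2 - q t ^ 2 + 1) / (2 * ‖x k‖)) :
    Real.sqrt (∑ t, (α' t ^ 2 + β t ^ 2)) * ∑ k, ‖x k‖ ≤ ‖∑ k, x k‖ := by
  subst hα
  have hS : 0 ≤ ∑ k, ‖x k‖ := Finset.sum_nonneg fun k _ => norm_nonneg _
  have hterm (t : Fin m) :
      (α' t ^ 2 + β t ^ 2) * (∑ k, ‖x k‖) ^ 2 ≤ ‖⟪a t, ∑ k, x k⟫_ℂ‖ ^ 2 := by
    have hre := iInf_mul_sum_norm_le_re_inner_sum (𝕜 := ℂ) x (ha.1 t) (h₁ · t)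
    have him := iInf_mul_sum_norm_le_re_inner_sum (𝕜 := ℂ) x (by simp [norm_smul, ha.1 t]) (h₂ · t)
    rw [← hα' t] at hre
    rw [← hβ t, RCLike.re_to_complex, Complex.re_inner_I_smul] at him
    rw [norm_inner_symm, add_mul, ← mul_pow, ← mul_pow]
    have hα'0 := (hα' t).symm ▸ iInf_div_nonneg_of_lt_sqrt (fun k => norm_nonneg (x k)) (hp t)
    have hβ0 := (hβ t).symm ▸ iInf_div_nonneg_of_lt_sqrt (fun k => norm_nonneg (x k)) (hq t)
    exact Complex.sq_add_sq_le_sq_norm (by positivity) (by positivity) hre him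
  refine Real.sqrt_mul_le_of_mul_sq_le hS (norm_nonneg _) ?_
  calc (∑ t, (α' t ^ 2 + β t ^ 2)) * (∑ k, ‖x k‖) ^ 2
      ≤ ∑ t, ‖⟪a t, ∑ k, x k⟫_ℂ‖ ^ 2 := by
        rw [Finset.sum_mul]; exact Finset.sum_le_sum fun t _ => hterm t
    _ ≤ ‖∑ k, x k‖ ^ 2 := ha.sum_inner_products_le _

theorem stmt_9 {H : Type*} [NormedAddCommGroup H] [InnerProductSpace ℂ H]
    (m : ℕ) (a : Fin m → H) (ha : Orthonormal ℂ a)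
    (n : ℕ) (hn : 0 < n) (x : Fin n → H) (hx : ∀ k, x k ≠ 0)
    (α : ℝ) (hα : α = ⨅ k, ‖x k‖)
    (p q : Fin m → ℝ)
    (hp : ∀ t, p t ∈ Set.Ioo 0 (Real.sqrt (α ^ 2 + 1)))
    (hq : ∀ t, q t ∈ Set.Ioo 0 (Real.sqrt (α ^ 2 + 1)))
    (h₁ : ∀ k t, ‖x k - a t‖ ≤ p t) (h₂ : ∀ k t, ‖x k - Complex.I • a t‖ ≤ q t)
    (α' β : Fin m → ℝ)
    (hα' : ∀ t, α' t = ⨅ k, (‖x k‖ ^ 2 - p t ^ 2 + 1) / (2 * ‖x k‖))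
    (hβ : ∀ t, β t = ⨅ k, (‖x k‖ ^ 2 - q t ^ 2 + 1) / (2 * ‖x k‖)) :
    Real.sqrt (∑ t, (α' t ^ 2 + β t ^ 2)) * ∑ k, ‖x k‖ ≤ ‖∑ k, x k‖ :=
  stmt_9_general m a ha n x α hα p q hp hq h₁ h₂ α' β hα' hβ
end

section
/- Let H be a complex inner product space and let a₁,…,a_m ∈ H be orthonormal vectors. Let x₁,…,xₙ ∈ H be nonzero vectors and set α = min_{1≤k≤n} ‖x_k‖. Suppose for each t ∈ {1,…,m} that p_t, q_t ∈ (0, √(α² + 1)) satisfy ‖x_k − a_t‖ ≤ p_t and ‖x_k − i a_t‖ ≤ q_t for all k ∈ {1,…,n}. Define α_t = min_{1≤k≤n} (‖x_k‖² − p_t² + 1)/(2‖x_k‖) and β_t = min_{1≤k≤n} (‖x_k‖² − q_t² + 1)/(2‖x_k‖), and assume Σ_{t=1}^m (α_t² + β_t²) ≠ 0. Then equality (Σ_{t=1}^m (α_t² + β_t²))^{1/2} · Σ_{k=1}^n ‖x_k‖ = ‖Σ_{k=1}^n x_k‖ holds if and only if Σ_{k=1}^n x_k = (Σ_{k=1}^n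 ‖x_k‖) · Σ_{t=1}^m (α_t + i β_t) a_t. -/
/-!
Put `w = ∑ₜ (α'ₜ + i βₜ) aₜ`, so that `‖w‖² = C := ∑ₜ (α'ₜ² + βₜ²)` by orthonormality.
Expanding `‖x_k - aₜ‖² ≤ pₜ²` gives `Re ⟪x_k, aₜ⟫ ≥ α'ₜ ‖x_k‖`, and likewise
`Re ⟪x_k, i aₜ⟫ ≥ βₜ ‖x_k‖`; as `α'ₜ, βₜ ≥ 0`, summing yields `Re ⟪S, w⟫ ≥ N ‖w‖²` for
`S = ∑ x_k` and `N = ∑ ‖x_k‖`. Then `‖S - N w‖² ≤ ‖S‖² - N² ‖w‖²`, so `‖S‖ = N ‖w‖`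
forces `S = N w`.

Both estimates are one real statement: in the underlying real inner product space
(`⟪u, v⟫_ℝ = Re ⟪u, v⟫`) it is applied to the unit vectors `aₜ` and `i aₜ`. The coefficients
are nonnegative because `pₜ² < α² + 1 ≤ ‖x_k‖² + 1`.
-/

open RealInnerProductSpace

section RealInner

variable {F ι : Type*} [NormedAddCommGroup F]

lemma sq_le_sq_norm_add_one_of_lt_sqrt {x : ι → F} {p : ℝ} (hp₀ : 0 < p)
    (hp : p < Real.sqrt ((⨅ k, ‖x k‖) ^ 2 + 1)) (k : ι) : p ^ 2 ≤ ‖x k‖ ^ 2 + 1 := by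
  have hinf : 0 ≤ ⨅ j, ‖x j‖ := Real.iInf_nonneg fun _ => norm_nonneg _
  have hle : ⨅ j, ‖x j‖ ≤ ‖x k‖ :=
    ciInf_le ⟨0, by rintro _ ⟨j, rfl⟩; exact norm_nonneg _⟩ k
  have := (Real.lt_sqrt hp₀.le).mp hp
  nlinarith

lemma iInf_div_nonneg_of_sq_le {x : ι → F} {p : ℝ} (hp : ∀ k, p ^ 2 ≤ ‖x k‖ ^ 2 + 1) :
    0 ≤ ⨅ k, (‖x k‖ ^ 2 - p ^ 2 + 1) / (2 * ‖x k‖) :=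
  Real.iInf_nonneg fun k => div_nonneg (by linarith [hp k]) (by positivity)

variable [InnerProductSpace ℝ F]

lemma mul_norm_le_inner_of_norm_sub_le {u v : F} {p c : ℝ} (hv : ‖v‖ = 1) (huv : ‖u - v‖ ≤ p)
    (hp : p ^ 2 ≤ ‖u‖ ^ 2 + 1) (hc : c ≤ (‖u‖ ^ 2 - p ^ 2 + 1) / (2 * ‖u‖)) :
    c * ‖u‖ ≤ ⟪u, v⟫ := by
  have hc' : c * (2 * ‖u‖) ≤ ‖u‖ ^ 2 - p ^ 2 + 1 :=
    mul_le_of_le_div₀ (by linarith) (by positivity) hc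
  have huv' : ‖u - v‖ ^ 2 ≤ p ^ 2 := pow_le_pow_left₀ (norm_nonneg _) huv 2
  rw [norm_sub_sq_real, hv] at huv'
  linarith

lemma iInf_div_mul_norm_le_inner {x : ι → F} {v : F} {p : ℝ} (hv : ‖v‖ = 1)
    (hxv : ∀ k, ‖x k - v‖ ≤ p) (hp : ∀ k, p ^ 2 ≤ ‖x k‖ ^ 2 + 1) (k : ι) :
    (⨅ j, (‖x j‖ ^ 2 - p ^ 2 + 1) / (2 * ‖x j‖)) * ‖x k‖ ≤ ⟪x k, v⟫ := by
  refine mul_norm_le_inner_of_norm_sub_le hv (hxv k) (hp k) (ciInf_le ⟨0, ?_⟩ k)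
  rintro _ ⟨j, rfl⟩
  exact div_nonneg (by linarith [hp j]) (by positivity)

lemma norm_eq_mul_norm_iff_eq_smul_of_mul_sq_le_inner {S w : F} {N : ℝ} (hN : 0 ≤ N)
    (h : N * ‖w‖ ^ 2 ≤ ⟪S, w⟫) : ‖S‖ = N * ‖w‖ ↔ S = N • w := by
  refine ⟨fun hS => ?_, fun hS => by rw [hS, norm_smul, Real.norm_of_nonneg hN]⟩
  have hsq : ‖S - N • w‖ ^ 2 ≤ 0 := by
    rw [norm_sub_sq_real, real_inner_smul_right, norm_smul, Real.norm_of_nonneg hN, hS]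
    nlinarith
  exact sub_eq_zero.mp (norm_eq_zero.mp (by nlinarith [norm_nonneg (S - N • w)]))

end RealInner

lemma Complex.ofReal_add_mul_I_smul {V : Type*} [AddCommGroup V] [Module ℂ V]
    (α β : ℝ) (v : V) :
    ((α : ℂ) + β * Complex.I) • v = α • v + β • (Complex.I • v) := by
  rw [add_smul, mul_smul, Complex.coe_smul, Complex.coe_smul]

section Complex

attribute [local instance] InnerProductSpace.complexToReal

variable {H : Type*} [NormedAddCommGroup H] [InnerProductSpace ℂ H]

lemma sum_sq_mul_norm_le_inner_sum {ι : Type*} (s : Finset ι) {u : H} {a : ι → H}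
    {α β : ι → ℝ} (hα : ∀ t, 0 ≤ α t) (hβ : ∀ t, 0 ≤ β t)
    (hre : ∀ t, α t * ‖u‖ ≤ ⟪u, a t⟫) (him : ∀ t, β t * ‖u‖ ≤ ⟪u, Complex.I • a t⟫) :
    (∑ t ∈ s, (α t ^ 2 + β t ^ 2)) * ‖u‖ ≤ ⟪u, ∑ t ∈ s, ((α t : ℂ) + β t * Complex.I) • a t⟫ := by
  rw [inner_sum, Finset.sum_mul]
  refine Finset.sum_le_sum fun t _ => ?_
  rw [Complex.ofReal_add_mul_I_smul, inner_add_right, real_inner_smul_right,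
    real_inner_smul_right]
  nlinarith [mul_le_mul_of_nonneg_left (hre t) (hα t), mul_le_mul_of_nonneg_left (him t) (hβ t)]

end Complex

theorem stmt_10_general {H : Type*} [NormedAddCommGroup H] [InnerProductSpace ℂ H]
    (m : ℕ) (a : Fin m → H) (ha : Orthonormal ℂ a)
    (n : ℕ) (x : Fin n → H)
    (α : ℝ) (hα : α = ⨅ k, ‖x k‖)
    (p q : Fin m → ℝ)
    (hp : ∀ t, p t ∈ Set.Ioo 0 (Real.sqrt (α ^ 2 + 1)))
    (hq : ∀ t, q t ∈ Set.Ioo 0 (Real.sqrt (α ^ 2 + 1)))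
    (h₁ : ∀ k t, ‖x k - a t‖ ≤ p t) (h₂ : ∀ k t, ‖x k - Complex.I • a t‖ ≤ q t)
    (α' β : Fin m → ℝ)
    (hα' : ∀ t, α' t = ⨅ k, (‖x k‖ ^ 2 - p t ^ 2 + 1) / (2 * ‖x k‖))
    (hβ : ∀ t, β t = ⨅ k, (‖x k‖ ^ 2 - q t ^ 2 + 1) / (2 * ‖x k‖)) :
    Real.sqrt (∑ t, (α' t ^ 2 + β t ^ 2)) * ∑ k, ‖x k‖ = ‖∑ k, x k‖ ↔
      ∑ k, x k = (∑ k, ‖x k‖ : ℝ) • ∑ t, ((α' t : ℂ) + β t * Complex.I) • a t := by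
  let _ := InnerProductSpace.complexToReal (G := H)
  subst hα
  set w := ∑ t, ((α' t : ℂ) + β t * Complex.I) • a t
  have hw : ‖w‖ ^ 2 = ∑ t, (α' t ^ 2 + β t ^ 2) := by
    simpa only [LinearIsometry.toSpanSingleton_apply, Complex.sq_norm, Complex.normSq_add_mul_I]
      using ha.orthogonalFamily.norm_sum (fun t => (α' t : ℂ) + β t * Complex.I) Finset.univ
  have hpx := fun t => sq_le_sq_norm_add_one_of_lt_sqrt (hp t).1 (hp t).2
  have hqx := fun t => sq_le_sq_norm_add_one_of_lt_sqrt (hq t).1 (hq t).2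
  have hIa : ∀ t, ‖Complex.I • a t‖ = 1 := fun t => by
    rw [norm_smul, Complex.norm_I, one_mul, ha.norm_eq_one]
  have hxw : ∀ k, ‖w‖ ^ 2 * ‖x k‖ ≤ ⟪x k, w⟫ := fun k => hw ▸
    sum_sq_mul_norm_le_inner_sum _
      (fun t => hα' t ▸ iInf_div_nonneg_of_sq_le (hpx t))
      (fun t => hβ t ▸ iInf_div_nonneg_of_sq_le (hqx t))
      (fun t => hα' t ▸ iInf_div_mul_norm_le_inner (ha.norm_eq_one t) (h₁ · t) (hpx t) k)
      (fun t => hβ t ▸ iInf_div_mul_norm_le_inner (hIa t) (h₂ · t) (hqx t) k)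
  have hSw : (∑ k, ‖x k‖) * ‖w‖ ^ 2 ≤ ⟪∑ k, x k, w⟫ := by
    rw [sum_inner, mul_comm, Finset.mul_sum]
    exact Finset.sum_le_sum fun k _ => hxw k
  rw [← hw, Real.sqrt_sq (norm_nonneg w), mul_comm, eq_comm]
  exact norm_eq_mul_norm_iff_eq_smul_of_mul_sq_le_inner (by positivity) hSw

theorem stmt_10 {H : Type*} [NormedAddCommGroup H] [InnerProductSpace ℂ H]
    (m : ℕ) (a : Fin m → H) (ha : Orthonormal ℂ a)
    (n : ℕ) (hn : 0 < n) (x : Fin n → H) (hx : ∀ k, x k ≠ 0)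
    (α : ℝ) (hα : α = ⨅ k, ‖x k‖)
    (p q : Fin m → ℝ)
    (hp : ∀ t, p t ∈ Set.Ioo 0 (Real.sqrt (α ^ 2 + 1)))
    (hq : ∀ t, q t ∈ Set.Ioo 0 (Real.sqrt (α ^ 2 + 1)))
    (h₁ : ∀ k t, ‖x k - a t‖ ≤ p t) (h₂ : ∀ k t, ‖x k - Complex.I • a t‖ ≤ q t)
    (α' β : Fin m → ℝ)
    (hα' : ∀ t, α' t = ⨅ k, (‖x k‖ ^ 2 - p t ^ 2 + 1) / (2 * ‖x k‖))
    (hβ : ∀ t, β t = ⨅ k, (‖x k‖ ^ 2 - q t ^ 2 + 1) / (2 * ‖x k‖))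
    (hne : ∑ t, (α' t ^ 2 + β t ^ 2) ≠ 0) :
    Real.sqrt (∑ t, (α' t ^ 2 + β t ^ 2)) * ∑ k, ‖x k‖ = ‖∑ k, x k‖ ↔
      ∑ k, x k = (∑ k, ‖x k‖ : ℝ) • ∑ t, ((α' t : ℂ) + β t * Complex.I) • a t :=
  stmt_10_general m a ha n x α hα p q hp hq h₁ h₂ α' β hα' hβ
end

section
/- Let H be a complex inner product space and let a₁,…,a_m ∈ H be orthonormal vectors. Suppose the nonzero vectors x₁,…,xₙ ∈ H satisfy ‖x_k − a_t‖ ≤ 1 and ‖x_k − i a_t‖ ≤ 1 for all k ∈ {1,…,n} and all t ∈ {1,…,m}, and let α = min_{1≤k≤n} ‖x_k‖. Then (α/√2) · √m · Σ_{k=1}^n ‖x_k‖ ≤ ‖Σ_{k=1}^n x_k‖. -/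
/-!
From `‖x - u‖ ≤ 1` and `‖u‖ = 1` one gets `‖x‖² / 2 ≤ Re ⟪u, x⟫`. Applied with `u = a t` and
`u = i • a t`, this bounds both the real and the imaginary part of `⟪a t, ∑ x_k⟫` below by
`σ / 2`, where `σ = ∑ ‖x_k‖² ≥ α ∑ ‖x_k‖`; so `|⟪a t, ∑ x_k⟫| ≥ σ / √2` for every `t`, and Bessel's
inequality gives `‖∑ x_k‖ ≥ √m · σ / √2`.
-/

open RCLike

section InnerProductSpace

variable {𝕜 E : Type*} [RCLike 𝕜] [NormedAddCommGroup E] [InnerProductSpace 𝕜 E]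

variable (𝕜) in
theorem norm_sq_div_two_le_re_inner_of_norm_sub_le_one {u v : E} (hu : ‖u‖ = 1)
    (h : ‖v - u‖ ≤ 1) : ‖v‖ ^ 2 / 2 ≤ re (inner 𝕜 u v) := by
  have hsq : ‖v - u‖ ^ 2 ≤ 1 := pow_le_one₀ (norm_nonneg _) h
  rw [@norm_sub_sq 𝕜, hu, inner_re_symm] at hsq
  linarith

theorem Orthonormal.sqrt_card_mul_le_norm {ι : Type*} [Fintype ι] {a : ι → E}
    (ha : Orthonormal 𝕜 a) (y : E) {c : ℝ} (hc : 0 ≤ c) (hle : ∀ t, c ≤ ‖inner 𝕜 (a t) y‖) :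
    √(Fintype.card ι) * c ≤ ‖y‖ := by
  have hsq : Fintype.card ι * c ^ 2 ≤ ‖y‖ ^ 2 :=
    calc Fintype.card ι * c ^ 2 = ∑ _t : ι, c ^ 2 := by simp
      _ ≤ ∑ t, ‖inner 𝕜 (a t) y‖ ^ 2 := by gcongr with t; exact hle t
      _ ≤ ‖y‖ ^ 2 := ha.sum_inner_products_le y
  calc √(Fintype.card ι) * c = √(Fintype.card ι * c ^ 2) := by
        rw [Real.sqrt_mul (Nat.cast_nonneg _), Real.sqrt_sq hc]
    _ ≤ √(‖y‖ ^ 2) := Real.sqrt_le_sqrt hsq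
    _ = ‖y‖ := Real.sqrt_sq (norm_nonneg y)

end InnerProductSpace

theorem Complex.sqrt_two_mul_le_norm_of_le_re_of_le_im {z : ℂ} {c : ℝ} (hc : 0 ≤ c)
    (hre : c ≤ z.re) (him : c ≤ z.im) : √2 * c ≤ ‖z‖ := by
  rw [← Real.sqrt_sq hc, ← Real.sqrt_mul zero_le_two, Complex.norm_def, Complex.normSq_apply]
  exact Real.sqrt_le_sqrt (by nlinarith)

theorem Complex.re_inner_I_smul_left {H : Type*} [NormedAddCommGroup H] [InnerProductSpace ℂ H]
    (u v : H) : (inner ℂ (Complex.I • u) v).re = (inner ℂ u v).im := by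
  simp

theorem mul_sum_norm_le_sum_norm_sq {ι E : Type*} [Fintype ι] [SeminormedAddCommGroup E]
    (x : ι → E) : (⨅ k, ‖x k‖) * ∑ k, ‖x k‖ ≤ ∑ k, ‖x k‖ ^ 2 := by
  rw [Finset.mul_sum]
  gcongr with k
  rw [sq]
  exact mul_le_mul_of_nonneg_right (ciInf_le (Finite.bddBelow_range _) k) (norm_nonneg _)

theorem stmt_11_general {H : Type*} [NormedAddCommGroup H] [InnerProductSpace ℂ H]
    (m : ℕ) (a : Fin m → H) (ha : Orthonormal ℂ a)
    (n : ℕ) (x : Fin n → H)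
    (h₁ : ∀ k t, ‖x k - a t‖ ≤ 1) (h₂ : ∀ k t, ‖x k - Complex.I • a t‖ ≤ 1)
    (α : ℝ) (hα : α = ⨅ k, ‖x k‖) :
    (α / Real.sqrt 2) * Real.sqrt m * ∑ k, ‖x k‖ ≤ ‖∑ k, x k‖ := by
  set σ := ∑ k, ‖x k‖ ^ 2
  have hI : ∀ t, ‖Complex.I • a t‖ = 1 := fun t => by rw [norm_smul, ha.1 t]; simp
  have hre : ∀ t, σ / 2 ≤ (inner ℂ (a t) (∑ k, x k)).re := fun t => by
    rw [inner_sum, Complex.re_sum, Finset.sum_div]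
    exact Finset.sum_le_sum fun k _ =>
      norm_sq_div_two_le_re_inner_of_norm_sub_le_one ℂ (ha.1 t) (h₁ k t)
  have him : ∀ t, σ / 2 ≤ (inner ℂ (a t) (∑ k, x k)).im := fun t => by
    rw [inner_sum, Complex.im_sum, Finset.sum_div]
    refine Finset.sum_le_sum fun k _ => ?_
    rw [← Complex.re_inner_I_smul_left]
    exact norm_sq_div_two_le_re_inner_of_norm_sub_le_one ℂ (hI t) (h₂ k t)
  have hσ : 0 ≤ σ / 2 := by positivity
  have hbound : √m * (√2 * (σ / 2)) ≤ ‖∑ k, x k‖ := by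
    simpa using ha.sqrt_card_mul_le_norm (∑ k, x k) (by positivity) fun t =>
      Complex.sqrt_two_mul_le_norm_of_le_re_of_le_im hσ (hre t) (him t)
  have hασ : α * ∑ k, ‖x k‖ ≤ σ := hα ▸ mul_sum_norm_le_sum_norm_sq x
  calc (α / √2) * √m * ∑ k, ‖x k‖ = √m * (√2 * ((α * ∑ k, ‖x k‖) / 2)) := by
        field_simp; rw [Real.sq_sqrt zero_le_two]; ring
    _ ≤ √m * (√2 * (σ / 2)) := by gcongr
    _ ≤ ‖∑ k, x k‖ := hbound

theorem stmt_11 {H : Type*} [NormedAddCommGroup H] [InnerProductSpace ℂ H]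
    (m : ℕ) (a : Fin m → H) (ha : Orthonormal ℂ a)
    (n : ℕ) (hn : 0 < n) (x : Fin n → H) (hx : ∀ k, x k ≠ 0)
    (h₁ : ∀ k t, ‖x k - a t‖ ≤ 1) (h₂ : ∀ k t, ‖x k - Complex.I • a t‖ ≤ 1)
    (α : ℝ) (hα : α = ⨅ k, ‖x k‖) :
    (α / Real.sqrt 2) * Real.sqrt m * ∑ k, ‖x k‖ ≤ ‖∑ k, x k‖ :=
  stmt_11_general m a ha n x h₁ h₂ α hα
end

section
/- Let H be a complex inner product space, a ∈ H a unit vector, and M ≥ m > 0, L ≥ ℓ > 0 real numbers. Suppose the nonzero vectors x₁,…,xₙ ∈ H satisfy ‖x_k − ((m+M)/2) a‖ ≤ (M−m)/2 and ‖x_k − ((L+ℓ)/2) i a‖ ≤ (L−ℓ)/2 for all k ∈ {1,…,n}. Define α_{m,M} = min_{1≤k≤n} (‖x_k‖² + mM)/((m+M)‖x_k‖) and α_{ℓ,L} = min_{1≤k≤n} (‖x_k‖² + ℓL)/((ℓ+L)‖x_k‖). Then equality (α_{m,M}² + α_{ℓ,L}²)^{1/2} · Σ_{k=1}^n ‖x_k‖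 = ‖Σ_{k=1}^n x_k‖ holds if and only if Σ_{k=1}^n x_k = (α_{m,M} + i α_{ℓ,L}) (Σ_{k=1}^n ‖x_k‖) a. -/
/-!
Expanding the square, the disc condition `‖x - ((m + M) / 2) • a‖ ≤ (M - m) / 2` says
`‖x‖ ^ 2 + m * M ≤ (m + M) * re ⟪x, a⟫`, hence `α_{m,M} * ‖x k‖ ≤ re ⟪x k, a⟫` for every `k`, and
after summing `α_{m,M} * ∑ ‖x k‖ ≤ re ⟪∑ x k, a⟫`; likewise for `I • a` and `α_{ℓ,L}`.
For `v = (α_{m,M} + α_{ℓ,L} I) • (∑ ‖x k‖) • a` these two bounds combine to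
`‖v‖ ^ 2 ≤ re ⟪∑ x k, v⟫`, so once `‖∑ x k‖ = ‖v‖` we get
`‖∑ x k - v‖ ^ 2 = 2 ‖v‖ ^ 2 - 2 re ⟪∑ x k, v⟫ ≤ 0`.
-/

open scoped InnerProductSpace

lemma eq_of_norm_eq_of_norm_sq_le_re_inner {𝕜 E : Type*} [RCLike 𝕜] [NormedAddCommGroup E]
    [InnerProductSpace 𝕜 E] {u v : E} (hnorm : ‖u‖ = ‖v‖)
    (hle : ‖v‖ ^ 2 ≤ RCLike.re ⟪u, v⟫_𝕜) : u = v := by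
  have hsub : ‖u - v‖ ^ 2 ≤ 0 := by
    rw [norm_sub_sq (𝕜 := 𝕜), hnorm]
    linarith
  exact sub_eq_zero.mp <| norm_eq_zero.mp <|
    (pow_eq_zero_iff two_ne_zero).mp (le_antisymm hsub (sq_nonneg _))

section

variable {H : Type*} [NormedAddCommGroup H] [InnerProductSpace ℂ H] {a : H} {m M : ℝ}

lemma norm_sq_add_mul_le_re_inner (ha : ‖a‖ = 1) {x : H}
    (h : ‖x - ((m + M) / 2 : ℝ) • a‖ ≤ (M - m) / 2) :
    ‖x‖ ^ 2 + m * M ≤ (m + M) * (⟪x, a⟫_ℂ).re := by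
  have hsq := pow_le_pow_left₀ (norm_nonneg _) h 2
  rw [norm_sub_sq (𝕜 := ℂ), norm_smul, ha, inner_smul_right_eq_smul, RCLike.re_to_complex,
    Complex.smul_re, smul_eq_mul, mul_one, Real.norm_eq_abs, sq_abs] at hsq
  linarith

lemma iInf_mul_norm_le_re_inner {ι : Type*} [Finite ι] {x : ι → H} (ha : ‖a‖ = 1)
    (hm : 0 < m) (hM : m ≤ M) (h : ∀ k, ‖x k - ((m + M) / 2 : ℝ) • a‖ ≤ (M - m) / 2) (k : ι) :
    (⨅ j, (‖x j‖ ^ 2 + m * M) / ((m + M) * ‖x j‖)) * ‖x k‖ ≤ (⟪x k, a⟫_ℂ).re := by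
  have hmM : 0 < m + M := by linarith
  calc (⨅ j, (‖x j‖ ^ 2 + m * M) / ((m + M) * ‖x j‖)) * ‖x k‖
      ≤ (‖x k‖ ^ 2 + m * M) / ((m + M) * ‖x k‖) * ‖x k‖ :=
        mul_le_mul_of_nonneg_right (ciInf_le (Set.finite_range _).bddBelow k) (norm_nonneg _)
    _ ≤ (‖x k‖ ^ 2 + m * M) / (m + M) := by
        -- for `x k = 0` the quotient is the junk value `_ / 0 = 0`
        rcases (norm_nonneg (x k)).eq_or_lt with h0 | hpos
        · rw [← h0, mul_zero]
          have : 0 < M := by linarith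
          positivity
        · exact le_of_eq (by field_simp)
    _ ≤ (⟪x k, a⟫_ℂ).re := by
        rw [div_le_iff₀' hmM]
        exact norm_sq_add_mul_le_re_inner ha (h k)

lemma iInf_mul_sum_norm_le_re_inner_sum_s15 {ι : Type*} [Fintype ι] {x : ι → H} (ha : ‖a‖ = 1)
    (hm : 0 < m) (hM : m ≤ M) (h : ∀ k, ‖x k - ((m + M) / 2 : ℝ) • a‖ ≤ (M - m) / 2) :
    (⨅ j, (‖x j‖ ^ 2 + m * M) / ((m + M) * ‖x j‖)) * ∑ k, ‖x k‖ ≤ (⟪∑ k, x k, a⟫_ℂ).re := by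
  rw [Finset.mul_sum, sum_inner, Complex.re_sum]
  exact Finset.sum_le_sum fun k _ => iInf_mul_norm_le_re_inner ha hm hM h k

end

theorem stmt_15_general {H : Type*} [NormedAddCommGroup H] [InnerProductSpace ℂ H]
    (a : H) (ha : ‖a‖ = 1) (m M ℓ L : ℝ) (hm : 0 < m) (hM : m ≤ M) (hℓ : 0 < ℓ) (hL : ℓ ≤ L)
    (n : ℕ) (x : Fin n → H)
    (h₁ : ∀ k, ‖x k - ((m + M) / 2 : ℝ) • a‖ ≤ (M - m) / 2)
    (h₂ : ∀ k, ‖x k - ((L + ℓ) / 2 : ℝ) • (Complex.I • a)‖ ≤ (L - ℓ) / 2)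
    (αmM αℓL : ℝ)
    (hαmM : αmM = ⨅ k, (‖x k‖ ^ 2 + m * M) / ((m + M) * ‖x k‖))
    (hαℓL : αℓL = ⨅ k, (‖x k‖ ^ 2 + ℓ * L) / ((ℓ + L) * ‖x k‖)) :
    Real.sqrt (αmM ^ 2 + αℓL ^ 2) * ∑ k, ‖x k‖ = ‖∑ k, x k‖ ↔
      ∑ k, x k = ((αmM : ℂ) + αℓL * Complex.I) • ((∑ k, ‖x k‖ : ℝ) • a) := by
  set s := ∑ k, ‖x k‖
  set v := ((αmM : ℂ) + αℓL * Complex.I) • (s • a)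
  have hs : 0 ≤ s := Finset.sum_nonneg fun k _ => norm_nonneg (x k)
  have hαmM_nonneg : 0 ≤ αmM := hαmM ▸ Real.iInf_nonneg fun k => by
    have : 0 < M := by linarith
    positivity
  have hαℓL_nonneg : 0 ≤ αℓL := hαℓL ▸ Real.iInf_nonneg fun k => by
    have : 0 < L := by linarith
    positivity
  have hαmM_le : αmM * s ≤ (⟪∑ k, x k, a⟫_ℂ).re :=
    hαmM ▸ iInf_mul_sum_norm_le_re_inner_sum_s15 ha hm hM h₁
  have hαℓL_le : αℓL * s ≤ (⟪∑ k, x k, Complex.I • a⟫_ℂ).re :=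
    hαℓL ▸ iInf_mul_sum_norm_le_re_inner_sum_s15 (by rw [norm_smul, Complex.norm_I, ha, one_mul])
      hℓ hL fun k => add_comm L ℓ ▸ h₂ k
  have hnorm : ‖v‖ = √(αmM ^ 2 + αℓL ^ 2) * s := by
    rw [norm_smul, norm_smul, Complex.norm_add_mul_I, ha, Real.norm_of_nonneg hs, mul_one]
  refine ⟨fun heq => eq_of_norm_eq_of_norm_sq_le_re_inner (𝕜 := ℂ) (hnorm ▸ heq.symm) ?_,
    fun heq => by rw [heq, hnorm]⟩
  calc ‖v‖ ^ 2 = (αmM * (αmM * s) + αℓL * (αℓL * s)) * s := by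
        rw [hnorm, mul_pow, Real.sq_sqrt (by positivity)]
        ring
    _ ≤ (αmM * (⟪∑ k, x k, a⟫_ℂ).re + αℓL * (⟪∑ k, x k, Complex.I • a⟫_ℂ).re) * s := by
        gcongr
    _ = RCLike.re ⟪∑ k, x k, v⟫_ℂ := by
        simp only [v, inner_smul_right, inner_smul_right_eq_smul, RCLike.re_to_complex,
          Complex.mul_re, Complex.mul_im, Complex.smul_re, Complex.smul_im, Complex.add_re,
          Complex.add_im, Complex.ofReal_re, Complex.ofReal_im, Complex.I_re, Complex.I_im,
          smul_eq_mul]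
        ring

theorem stmt_15 {H : Type*} [NormedAddCommGroup H] [InnerProductSpace ℂ H]
    (a : H) (ha : ‖a‖ = 1) (m M ℓ L : ℝ) (hm : 0 < m) (hM : m ≤ M) (hℓ : 0 < ℓ) (hL : ℓ ≤ L)
    (n : ℕ) (hn : 0 < n) (x : Fin n → H) (hx : ∀ k, x k ≠ 0)
    (h₁ : ∀ k, ‖x k - ((m + M) / 2 : ℝ) • a‖ ≤ (M - m) / 2)
    (h₂ : ∀ k, ‖x k - ((L + ℓ) / 2 : ℝ) • (Complex.I • a)‖ ≤ (L - ℓ) / 2)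
    (αmM αℓL : ℝ)
    (hαmM : αmM = ⨅ k, (‖x k‖ ^ 2 + m * M) / ((m + M) * ‖x k‖))
    (hαℓL : αℓL = ⨅ k, (‖x k‖ ^ 2 + ℓ * L) / ((ℓ + L) * ‖x k‖)) :
    Real.sqrt (αmM ^ 2 + αℓL ^ 2) * ∑ k, ‖x k‖ = ‖∑ k, x k‖ ↔
      ∑ k, x k = ((αmM : ℂ) + αℓL * Complex.I) • ((∑ k, ‖x k‖ : ℝ) • a) :=
  stmt_15_general a ha m M ℓ L hm hM hℓ hL n x h₁ h₂ αmM αℓL hαmM hαℓL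
end

section
/- Let H be a complex inner product space, a ∈ H a unit vector, and M ≥ m > 0, L ≥ ℓ > 0 real numbers. Suppose the nonzero vectors x₁,…,xₙ ∈ H satisfy ‖x_k − ((m+M)/2) a‖ ≤ (M−m)/2 and ‖x_k − ((L+ℓ)/2) i a‖ ≤ (L−ℓ)/2 for all k ∈ {1,…,n}. Define α_{m,M} = min_{1≤k≤n} (‖x_k‖² + mM)/((m+M)‖x_k‖) and α_{ℓ,L} = min_{1≤k≤n} (‖x_k‖² + ℓL)/((ℓ+L)‖x_k‖). If α_{m,M} ≠ 2√(mM)/(m+M) or α_{ℓ,L} ≠ 2√(ℓL)/(ℓ+L), then the strict inequality 2·(mM/(m+M)² + ℓL/(ℓ+L)²)^{1/2} · Σ_{k=1}^n ‖x_k‖ < ‖Σ_{k=1}^n x_k‖ holds. -/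
/-!
The ball condition `‖x - ((p + q) / 2) • b‖ ≤ (q - p) / 2` squares to
`‖x‖² + p q ≤ (p + q) Re⟪x, b⟫`, so by the definition of the minima
`α_{m,M} ‖x_k‖ ≤ Re⟪x_k, a⟫` and `α_{ℓ,L} ‖x_k‖ ≤ Re⟪x_k, i a⟫`. Since `a` and `i a` are orthonormal
for the real inner product `Re⟪·, ·⟫`, summing over `k` and applying Bessel's inequality gives
`√(α_{m,M}² + α_{ℓ,L}²) ∑ ‖x_k‖ ≤ ‖∑ x_k‖`. By AM-GM each `α` is at least `2√(pq) / (p + q)`,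
and one of them strictly, which yields the strict inequality.
-/

open RealInnerProductSpace

section RealInnerProductSpace

variable {F : Type*} [NormedAddCommGroup F] [InnerProductSpace ℝ F]

theorem norm_sq_add_mul_le_mul_inner {b x : F} {p q : ℝ} (hb : ‖b‖ = 1)
    (h : ‖x - ((p + q) / 2) • b‖ ≤ (q - p) / 2) :
    ‖x‖ ^ 2 + p * q ≤ (p + q) * ⟪x, b⟫ := by
  have hsq := pow_le_pow_left₀ (norm_nonneg _) h 2
  rw [norm_sub_sq_real, real_inner_smul_right, norm_smul, hb, mul_one, Real.norm_eq_abs,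
    sq_abs] at hsq
  nlinarith

theorem two_sqrt_mul_div_le {p q t : ℝ} (hpq : 0 ≤ p * q) (hp_add_q : 0 < p + q) (ht : 0 < t) :
    2 * √(p * q) / (p + q) ≤ (t ^ 2 + p * q) / ((p + q) * t) := by
  rw [div_le_div_iff₀ hp_add_q (mul_pos hp_add_q ht)]
  nlinarith [sq_nonneg (t - √(p * q)), Real.sq_sqrt hpq]

theorem mul_norm_le_inner {b x : F} {p q α : ℝ} (hb : ‖b‖ = 1) (hp_add_q : 0 < p + q)
    (hx : x ≠ 0) (h : ‖x - ((p + q) / 2) • b‖ ≤ (q - p) / 2)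
    (hα : α ≤ (‖x‖ ^ 2 + p * q) / ((p + q) * ‖x‖)) :
    α * ‖x‖ ≤ ⟪x, b⟫ := by
  have hden : 0 < (p + q) * ‖x‖ := mul_pos hp_add_q (norm_pos_iff.mpr hx)
  rw [le_div_iff₀ hden] at hα
  nlinarith [norm_sq_add_mul_le_mul_inner hb h]

theorem inner_sq_add_inner_sq_le_norm_sq {b c : F} (hb : ‖b‖ = 1) (hc : ‖c‖ = 1)
    (hbc : ⟪b, c⟫ = 0) (u : F) : ⟪u, b⟫ ^ 2 + ⟪u, c⟫ ^ 2 ≤ ‖u‖ ^ 2 := by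
  have hon : Orthonormal ℝ ![b, c] := by
    rw [orthonormal_iff_ite]
    intro i j
    fin_cases i <;> fin_cases j <;>
      simp [hb, hc, hbc, real_inner_comm b c]
  simpa [Fin.sum_univ_two, real_inner_comm u] using
    hon.sum_inner_products_le (s := Finset.univ) (x := u)

theorem sqrt_sq_add_sq_mul_sum_norm_le_norm_sum {ι : Type*} (s : Finset ι) (x : ι → F)
    {b c : F} (hb : ‖b‖ = 1) (hc : ‖c‖ = 1) (hbc : ⟪b, c⟫ = 0) {α β : ℝ} (hα₀ : 0 ≤ α)
    (hβ₀ : 0 ≤ β) (hα : ∀ k ∈ s, α * ‖x k‖ ≤ ⟪x k, b⟫) (hβ : ∀ k ∈ s, β * ‖x k‖ ≤ ⟪x k, c⟫) :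
    √(α ^ 2 + β ^ 2) * ∑ k ∈ s, ‖x k‖ ≤ ‖∑ k ∈ s, x k‖ := by
  set S := ∑ k ∈ s, ‖x k‖
  have hS : 0 ≤ S := Finset.sum_nonneg fun k _ => norm_nonneg _
  have hb' : α * S ≤ ⟪∑ k ∈ s, x k, b⟫ := by
    rw [sum_inner, Finset.mul_sum]; exact Finset.sum_le_sum hα
  have hc' : β * S ≤ ⟪∑ k ∈ s, x k, c⟫ := by
    rw [sum_inner, Finset.mul_sum]; exact Finset.sum_le_sum hβ
  have hsq : (√(α ^ 2 + β ^ 2) * S) ^ 2 ≤ ‖∑ k ∈ s, x k‖ ^ 2 := by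
    rw [mul_pow, Real.sq_sqrt (by positivity)]
    nlinarith [inner_sq_add_inner_sq_le_norm_sq hb hc hbc (∑ k ∈ s, x k),
      mul_le_mul hb' hb' (by positivity) (by linarith [mul_nonneg hα₀ hS]),
      mul_le_mul hc' hc' (by positivity) (by linarith [mul_nonneg hβ₀ hS])]
  exact le_of_pow_le_pow_left₀ two_ne_zero (norm_nonneg _) hsq

end RealInnerProductSpace

theorem sqrt_sq_add_sq_lt_sqrt_sq_add_sq {a b a' b' : ℝ} (ha : 0 ≤ a) (hb : 0 ≤ b)
    (haa' : a ≤ a') (hbb' : b ≤ b') (hne : a ≠ a' ∨ b ≠ b') :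
    √(a ^ 2 + b ^ 2) < √(a' ^ 2 + b' ^ 2) := by
  have ha2 := pow_le_pow_left₀ ha haa' 2
  have hb2 := pow_le_pow_left₀ hb hbb' 2
  refine Real.sqrt_lt_sqrt (by positivity) ?_
  rcases hne with h | h
  · linarith [pow_lt_pow_left₀ (lt_of_le_of_ne haa' h) ha two_ne_zero]
  · linarith [pow_lt_pow_left₀ (lt_of_le_of_ne hbb' h) hb two_ne_zero]

theorem two_sqrt_mul_div_sq {p q : ℝ} (hpq : 0 ≤ p * q) :
    (2 * √(p * q) / (p + q)) ^ 2 = 4 * (p * q / (p + q) ^ 2) := by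
  rw [div_pow, mul_pow, Real.sq_sqrt hpq]; ring

theorem stmt_16 {H : Type*} [NormedAddCommGroup H] [InnerProductSpace ℂ H]
    (a : H) (ha : ‖a‖ = 1) (m M ℓ L : ℝ) (hm : 0 < m) (hM : m ≤ M) (hℓ : 0 < ℓ) (hL : ℓ ≤ L)
    (n : ℕ) (hn : 0 < n) (x : Fin n → H) (hx : ∀ k, x k ≠ 0)
    (h₁ : ∀ k, ‖x k - ((m + M) / 2 : ℝ) • a‖ ≤ (M - m) / 2)
    (h₂ : ∀ k, ‖x k - ((L + ℓ) / 2 : ℝ) • (Complex.I • a)‖ ≤ (L - ℓ) / 2)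
    (αmM αℓL : ℝ)
    (hαmM : αmM = ⨅ k, (‖x k‖ ^ 2 + m * M) / ((m + M) * ‖x k‖))
    (hαℓL : αℓL = ⨅ k, (‖x k‖ ^ 2 + ℓ * L) / ((ℓ + L) * ‖x k‖))
    (hne : αmM ≠ 2 * Real.sqrt (m * M) / (m + M) ∨ αℓL ≠ 2 * Real.sqrt (ℓ * L) / (ℓ + L)) :
    2 * Real.sqrt (m * M / (m + M) ^ 2 + ℓ * L / (ℓ + L) ^ 2) * ∑ k, ‖x k‖ < ‖∑ k, x k‖ := by
  let _ := InnerProductSpace.complexToReal (G := H)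
  have : Nonempty (Fin n) := ⟨⟨0, hn⟩⟩
  have hmM : 0 ≤ m * M := by nlinarith
  have hℓL : 0 ≤ ℓ * L := by nlinarith
  have hIa : ‖Complex.I • a‖ = 1 := by rw [norm_smul, Complex.norm_I, one_mul, ha]
  set A := 2 * √(m * M) / (m + M)
  set B := 2 * √(ℓ * L) / (ℓ + L)
  have hA₀ : 0 ≤ A := div_nonneg (by positivity) (by linarith)
  have hB₀ : 0 ≤ B := div_nonneg (by positivity) (by linarith)
  have hA : A ≤ αmM :=
    hαmM ▸ le_ciInf fun k => two_sqrt_mul_div_le hmM (by linarith) (norm_pos_iff.mpr (hx k))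
  have hB : B ≤ αℓL :=
    hαℓL ▸ le_ciInf fun k => two_sqrt_mul_div_le hℓL (by linarith) (norm_pos_iff.mpr (hx k))
  have hsum : √(αmM ^ 2 + αℓL ^ 2) * ∑ k, ‖x k‖ ≤ ‖∑ k, x k‖ := by
    refine sqrt_sq_add_sq_mul_sum_norm_le_norm_sum _ x ha hIa (real_inner_I_smul_self ℂ a)
      (hA₀.trans hA) (hB₀.trans hB) (fun k _ => ?_) (fun k _ => ?_)
    · exact mul_norm_le_inner ha (by linarith) (hx k) (h₁ k)
        (hαmM ▸ ciInf_le (Set.finite_range _).bddBelow k)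
    · exact mul_norm_le_inner hIa (by linarith) (hx k) (by simpa only [add_comm L ℓ] using h₂ k)
        (hαℓL ▸ ciInf_le (Set.finite_range _).bddBelow k)
  have hS : 0 < ∑ k, ‖x k‖ :=
    Finset.sum_pos (fun k _ => norm_pos_iff.mpr (hx k)) Finset.univ_nonempty
  calc 2 * √(m * M / (m + M) ^ 2 + ℓ * L / (ℓ + L) ^ 2) * ∑ k, ‖x k‖
      = √(A ^ 2 + B ^ 2) * ∑ k, ‖x k‖ := by
        rw [two_sqrt_mul_div_sq hmM, two_sqrt_mul_div_sq hℓL, ← mul_add,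
          Real.sqrt_mul' _ (by positivity), show (4 : ℝ) = 2 ^ 2 by norm_num,
          Real.sqrt_sq zero_le_two]
    _ < √(αmM ^ 2 + αℓL ^ 2) * ∑ k, ‖x k‖ := mul_lt_mul_of_pos_right
        (sqrt_sq_add_sq_lt_sqrt_sq_add_sq hA₀ hB₀ hA hB (hne.imp Ne.symm Ne.symm)) hS
    _ ≤ ‖∑ k, x k‖ := hsum
end

section
/- Let a ∈ ℂ with |a| = 1. Let z₁,…,zₙ ∈ ℂ be nonzero complex numbers and set α = min_{1≤k≤n} |z_k|. Suppose p₁, p₂ ∈ (0, √(α² + 1)) satisfy |z_k − a| ≤ p₁ and |z_k − i a| ≤ p₂ for all k ∈ {1,…,n}. Define α₁ = min_{1≤k≤n} (|z_k|² − p₁² + 1)/(2|z_k|) and α₂ = min_{1≤k≤n} (|z_k|² − p₂² + 1)/(2|z_k|). Then √(α₁² + α₂²) · Σ_{k=1}^n |z_k| ≤ |Σ_{k=1}^n z_k|, with equality if and only if Σ_{k=1}^n z_k = (α₁ + i α₂) (Σ_{k=1}^n |z_k|) a. -/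
/-!
Rotating by `conj a` moves the two reference points `a` and `i a` to `1` and `i`. Expanding
`‖w - 1‖² ≤ p₁²` gives `2 Re w ≥ ‖w‖² - p₁² + 1 ≥ 2 α₁ ‖w‖`, and likewise `Im w ≥ α₂ ‖w‖`
from `‖w - i‖ ≤ p₂`. Summing, `W = conj a · ∑ z_k` dominates `v = (α₁ + α₂ i) ∑ ‖z_k‖`
coordinatewise, and `v` lies in the closed first quadrant because the bounds on `p₁, p₂` make
`α₁, α₂ ≥ 0`; hence `‖v‖ ≤ ‖W‖`, with equality exactly when `W = v`.
-/

open ComplexConjugate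

namespace Complex

theorem mul_norm_le_re_mul_conj {u w : ℂ} (hu : ‖u‖ = 1) {p c : ℝ} (hw : ‖w - u‖ ≤ p)
    (hc : c ≤ (‖w‖ ^ 2 - p ^ 2 + 1) / (2 * ‖w‖)) : c * ‖w‖ ≤ (w * conj u).re := by
  rcases eq_or_ne w 0 with rfl | hw₀
  · simp
  have hexpand : ‖w - u‖ ^ 2 = ‖w‖ ^ 2 + 1 - 2 * (w * conj u).re := by
    rw [Complex.sq_norm, Complex.sq_norm, normSq_sub, ← Complex.sq_norm u, hu, one_pow]
  rw [le_div_iff₀ (by positivity)] at hc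
  nlinarith [pow_le_pow_left₀ (norm_nonneg _) hw 2]

theorem mul_sum_norm_le_re_sum_mul_conj {ι : Type*} (s : Finset ι) {z : ι → ℂ} {u : ℂ}
    (hu : ‖u‖ = 1) {p c : ℝ} (hz : ∀ k ∈ s, ‖z k - u‖ ≤ p)
    (hc : ∀ k ∈ s, c ≤ (‖z k‖ ^ 2 - p ^ 2 + 1) / (2 * ‖z k‖)) :
    c * ∑ k ∈ s, ‖z k‖ ≤ ((∑ k ∈ s, z k) * conj u).re := by
  rw [Finset.mul_sum, Finset.sum_mul, re_sum]
  exact Finset.sum_le_sum fun k hk => mul_norm_le_re_mul_conj hu (hz k hk) (hc k hk)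

theorem re_mul_conj_I_mul (w u : ℂ) : (w * conj (I * u)).re = (w * conj u).im := by
  simp only [map_mul, conj_I, mul_re, mul_im, neg_re, neg_im, I_re, I_im, conj_re, conj_im]
  ring

theorem mul_conj_eq_iff_eq_mul {u : ℂ} (hu : ‖u‖ = 1) (w v : ℂ) : w * conj u = v ↔ w = v * u := by
  rw [← inv_eq_conj hu, ← div_eq_mul_inv, div_eq_iff (norm_ne_zero_iff.mp (hu ▸ one_ne_zero))]

variable {v w : ℂ}

theorem norm_le_norm_of_re_le_of_im_le (hre₀ : 0 ≤ v.re) (hre : v.re ≤ w.re) (him₀ : 0 ≤ v.im)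
    (him : v.im ≤ w.im) : ‖v‖ ≤ ‖w‖ := by
  rw [norm_def, norm_def, normSq_apply, normSq_apply]
  exact Real.sqrt_le_sqrt (by nlinarith)

theorem norm_eq_norm_iff_of_re_le_of_im_le (hre₀ : 0 ≤ v.re) (hre : v.re ≤ w.re)
    (him₀ : 0 ≤ v.im) (him : v.im ≤ w.im) : ‖v‖ = ‖w‖ ↔ w = v := by
  refine ⟨fun h => ?_, fun h => h ▸ rfl⟩
  have hsq : v.re * v.re + v.im * v.im = w.re * w.re + w.im * w.im := by
    rw [← normSq_apply, ← normSq_apply, ← Complex.sq_norm, ← Complex.sq_norm, h]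
  apply Complex.ext <;> nlinarith

end Complex

theorem sq_sub_sq_add_one_div_nonneg {α r p : ℝ} (hα : 0 ≤ α) (hαr : α ≤ r) (hp : 0 ≤ p)
    (hpα : p < √(α ^ 2 + 1)) : 0 ≤ (r ^ 2 - p ^ 2 + 1) / (2 * r) := by
  have hp_sq : p ^ 2 < α ^ 2 + 1 := (Real.lt_sqrt hp).mp hpα
  exact div_nonneg (by nlinarith) (by linarith)

open Complex

theorem stmt_17_general (a : ℂ) (ha : ‖a‖ = 1)
    (n : ℕ) (z : Fin n → ℂ)
    (α : ℝ) (hα : α = ⨅ k, ‖z k‖)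
    (p₁ p₂ : ℝ) (hp₁ : p₁ ∈ Set.Ioo 0 (Real.sqrt (α ^ 2 + 1)))
    (hp₂ : p₂ ∈ Set.Ioo 0 (Real.sqrt (α ^ 2 + 1)))
    (h₁ : ∀ k, ‖z k - a‖ ≤ p₁) (h₂ : ∀ k, ‖z k - Complex.I * a‖ ≤ p₂)
    (α₁ α₂ : ℝ)
    (hα₁ : α₁ = ⨅ k, (‖z k‖ ^ 2 - p₁ ^ 2 + 1) / (2 * ‖z k‖))
    (hα₂ : α₂ = ⨅ k, (‖z k‖ ^ 2 - p₂ ^ 2 + 1) / (2 * ‖z k‖)) :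
    Real.sqrt (α₁ ^ 2 + α₂ ^ 2) * ∑ k, ‖z k‖ ≤ ‖∑ k, z k‖ ∧
      (Real.sqrt (α₁ ^ 2 + α₂ ^ 2) * ∑ k, ‖z k‖ = ‖∑ k, z k‖ ↔
        ∑ k, z k = ((α₁ : ℂ) + α₂ * Complex.I) * (∑ k, (‖z k‖ : ℂ)) * a) := by
  have hα₀ : 0 ≤ α := hα ▸ Real.iInf_nonneg fun k => norm_nonneg _
  have hαk : ∀ k, α ≤ ‖z k‖ := fun k => hα ▸ ciInf_le (Finite.bddBelow_range _) k
  have hα₁₀ : 0 ≤ α₁ := hα₁ ▸ Real.iInf_nonneg fun k =>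
    sq_sub_sq_add_one_div_nonneg hα₀ (hαk k) hp₁.1.le hp₁.2
  have hα₂₀ : 0 ≤ α₂ := hα₂ ▸ Real.iInf_nonneg fun k =>
    sq_sub_sq_add_one_div_nonneg hα₀ (hαk k) hp₂.1.le hp₂.2
  set T := ∑ k, ‖z k‖
  set v : ℂ := ((α₁ : ℂ) + α₂ * I) * T
  set W := (∑ k, z k) * conj a
  have hv_re : v.re = α₁ * T := by simp [v]
  have hv_im : v.im = α₂ * T := by simp [v]
  have hre : v.re ≤ W.re := hv_re ▸ mul_sum_norm_le_re_sum_mul_conj _ ha (fun k _ => h₁ k)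
    fun k _ => hα₁ ▸ ciInf_le (Finite.bddBelow_range _) k
  have him : v.im ≤ W.im := hv_im ▸ re_mul_conj_I_mul (∑ k, z k) a ▸
    mul_sum_norm_le_re_sum_mul_conj _ (by rw [norm_mul, norm_I, ha, one_mul]) (fun k _ => h₂ k)
      fun k _ => hα₂ ▸ ciInf_le (Finite.bddBelow_range _) k
  have hre₀ : 0 ≤ v.re := hv_re ▸ by positivity
  have him₀ : 0 ≤ v.im := hv_im ▸ by positivity
  have hnorm_v : ‖v‖ = √(α₁ ^ 2 + α₂ ^ 2) * T := by
    rw [norm_mul, norm_add_mul_I, norm_real, Real.norm_of_nonneg (by positivity)]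
  have hnorm_W : ‖W‖ = ‖∑ k, z k‖ := by rw [norm_mul, norm_conj, ha, mul_one]
  rw [← ofReal_sum, ← hnorm_v, ← hnorm_W, ← mul_conj_eq_iff_eq_mul ha]
  exact ⟨norm_le_norm_of_re_le_of_im_le hre₀ hre him₀ him,
    norm_eq_norm_iff_of_re_le_of_im_le hre₀ hre him₀ him⟩

theorem stmt_17 (a : ℂ) (ha : ‖a‖ = 1)
    (n : ℕ) (hn : 0 < n) (z : Fin n → ℂ) (hz : ∀ k, z k ≠ 0)
    (α : ℝ) (hα : α = ⨅ k, ‖z k‖)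
    (p₁ p₂ : ℝ) (hp₁ : p₁ ∈ Set.Ioo 0 (Real.sqrt (α ^ 2 + 1)))
    (hp₂ : p₂ ∈ Set.Ioo 0 (Real.sqrt (α ^ 2 + 1)))
    (h₁ : ∀ k, ‖z k - a‖ ≤ p₁) (h₂ : ∀ k, ‖z k - Complex.I * a‖ ≤ p₂)
    (α₁ α₂ : ℝ)
    (hα₁ : α₁ = ⨅ k, (‖z k‖ ^ 2 - p₁ ^ 2 + 1) / (2 * ‖z k‖))
    (hα₂ : α₂ = ⨅ k, (‖z k‖ ^ 2 - p₂ ^ 2 + 1) / (2 * ‖z k‖)) :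
    Real.sqrt (α₁ ^ 2 + α₂ ^ 2) * ∑ k, ‖z k‖ ≤ ‖∑ k, z k‖ ∧
      (Real.sqrt (α₁ ^ 2 + α₂ ^ 2) * ∑ k, ‖z k‖ = ‖∑ k, z k‖ ↔
        ∑ k, z k = ((α₁ : ℂ) + α₂ * Complex.I) * (∑ k, (‖z k‖ : ℂ)) * a) :=
  stmt_17_general a ha n z α hα p₁ p₂ hp₁ hp₂ h₁ h₂ α₁ α₂ hα₁ hα₂
end

section
/- Let a ∈ ℂ with |a| = 1. Suppose the nonzero complex numbers z₁,…,zₙ satisfy |z_k − a| ≤ 1 and |z_k − i a| ≤ 1 for all k ∈ {1,…,n}, and let α = min_{1≤k≤n} |z_k|. Then (α/√2) · Σ_{k=1}^n |z_k| ≤ |Σ_{k=1}^n z_k|, with equality if and only if Σ_{k=1}^n z_k = α·((1+i)/2)·(Σ_{k=1}^n |z_k|)·a. -/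
/-!
Rotating by `conj a` reduces to `a = 1`. The disc conditions `‖w - 1‖ ≤ 1` and `‖w - I‖ ≤ 1` say
exactly `‖w‖² ≤ 2 re w` and `‖w‖² ≤ 2 im w`; combined with `α ≤ ‖w‖` and summed, both coordinates of
the rotated sum are at least `α ∑ ‖z k‖ / 2`, so it lies in a quarter plane whose nearest point to
the origin is the corner `α ∑ ‖z k‖ (1 + I) / 2`, at distance `α ∑ ‖z k‖ / √2`.
-/

open ComplexConjugate

namespace Complex

lemma sq_norm_le_two_mul_re_mul_conj {z u : ℂ} (h : ‖z - u‖ ≤ ‖u‖) :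
    ‖z‖ ^ 2 ≤ 2 * (z * conj u).re := by
  have h' : normSq (z - u) ≤ normSq u := by
    simpa only [← Complex.sq_norm] using pow_le_pow_left₀ (norm_nonneg _) h 2
  rw [Complex.sq_norm]
  linarith [normSq_sub z u]

lemma mul_sum_norm_le_two_mul_re_sum_mul_conj {ι : Type*} (s : Finset ι) (z : ι → ℂ) {u : ℂ}
    {α : ℝ} (hα : ∀ k ∈ s, α ≤ ‖z k‖) (hz : ∀ k ∈ s, ‖z k - u‖ ≤ ‖u‖) :
    α * ∑ k ∈ s, ‖z k‖ ≤ 2 * ((∑ k ∈ s, z k) * conj u).re := by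
  rw [Finset.mul_sum, Finset.sum_mul, re_sum, Finset.mul_sum]
  refine Finset.sum_le_sum fun k hk => ?_
  calc α * ‖z k‖ ≤ ‖z k‖ * ‖z k‖ := mul_le_mul_of_nonneg_right (hα k hk) (norm_nonneg _)
    _ = ‖z k‖ ^ 2 := (sq _).symm
    _ ≤ 2 * (z k * conj u).re := sq_norm_le_two_mul_re_mul_conj (hz k hk)

lemma norm_ofReal_mul_one_add_I_div_two {c : ℝ} (hc : 0 ≤ c) :
    ‖(c : ℂ) * ((1 + I) / 2)‖ = c / √2 := by
  have h : ‖(1 + I : ℂ)‖ = √2 := by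
    rw [norm_def, normSq_apply]; norm_num
  rw [norm_mul, norm_div, h, norm_real, Real.norm_of_nonneg hc, Complex.norm_two, mul_div_assoc',
    div_eq_div_iff (by norm_num) (by positivity)]
  nlinarith [Real.mul_self_sqrt (show (0:ℝ) ≤ 2 by norm_num)]

lemma div_sqrt_two_le_norm {w : ℂ} {c : ℝ} (hc : 0 ≤ c) (hre : c ≤ 2 * w.re)
    (him : c ≤ 2 * w.im) : c / √2 ≤ ‖w‖ := by
  rw [norm_def, div_le_iff₀ (by positivity), ← Real.sqrt_mul (normSq_nonneg w)]
  refine Real.le_sqrt_of_sq_le ?_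
  rw [normSq_apply]
  nlinarith

lemma div_sqrt_two_eq_norm_iff {w : ℂ} {c : ℝ} (hc : 0 ≤ c) (hre : c ≤ 2 * w.re)
    (him : c ≤ 2 * w.im) : c / √2 = ‖w‖ ↔ w = c * ((1 + I) / 2) := by
  refine ⟨fun h => ?_, fun h => by rw [h, norm_ofReal_mul_one_add_I_div_two hc]⟩
  have hsq : w.re * w.re + w.im * w.im = c ^ 2 / 2 := by
    rw [← normSq_apply, ← Complex.sq_norm, ← h, div_pow, Real.sq_sqrt zero_le_two]
  have hre' : w.re = c / 2 := by nlinarith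
  have him' : w.im = c / 2 := by nlinarith
  apply Complex.ext <;> simp [hre', him', div_eq_mul_inv]

end Complex

open Complex

theorem stmt_18_general (a : ℂ) (ha : ‖a‖ = 1)
    (n : ℕ) (z : Fin n → ℂ)
    (h₁ : ∀ k, ‖z k - a‖ ≤ 1) (h₂ : ∀ k, ‖z k - Complex.I * a‖ ≤ 1)
    (α : ℝ) (hα : α = ⨅ k, ‖z k‖) :
    (α / Real.sqrt 2) * ∑ k, ‖z k‖ ≤ ‖∑ k, z k‖ ∧
      ((α / Real.sqrt 2) * ∑ k, ‖z k‖ = ‖∑ k, z k‖ ↔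
        ∑ k, z k = (α : ℂ) * ((1 + Complex.I) / 2) * (∑ k, (‖z k‖ : ℂ)) * a) := by
  have hα₀ : 0 ≤ α := hα ▸ Real.iInf_nonneg fun k => norm_nonneg (z k)
  have hαle : ∀ k ∈ Finset.univ, α ≤ ‖z k‖ :=
    fun k _ => hα ▸ ciInf_le (Set.finite_range _).bddBelow k
  set w := (∑ k, z k) * conj a
  have hre : α * ∑ k, ‖z k‖ ≤ 2 * w.re :=
    mul_sum_norm_le_two_mul_re_sum_mul_conj _ z hαle fun k _ => ha ▸ h₁ k
  have him : α * ∑ k, ‖z k‖ ≤ 2 * w.im := by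
    have := mul_sum_norm_le_two_mul_re_sum_mul_conj _ z hαle
      fun k _ => (by simpa [ha] using h₂ k : ‖z k - I * a‖ ≤ ‖I * a‖)
    simpa [w, mul_left_comm] using this
  have hαT : 0 ≤ α * ∑ k, ‖z k‖ := mul_nonneg hα₀ (Finset.sum_nonneg fun k _ => norm_nonneg _)
  have hsum : ∑ k, z k = w * a := by
    rw [mul_assoc, conj_mul', ha, ofReal_one, one_pow, mul_one]
  have ha₀ : a ≠ 0 := norm_ne_zero_iff.mp (ha ▸ one_ne_zero)
  rw [hsum, norm_mul, ha, mul_one, div_mul_eq_mul_div, ← ofReal_sum, mul_right_comm (ofReal α),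
    ← ofReal_mul, mul_left_inj' ha₀]
  exact ⟨div_sqrt_two_le_norm hαT hre him, div_sqrt_two_eq_norm_iff hαT hre him⟩

theorem stmt_18 (a : ℂ) (ha : ‖a‖ = 1)
    (n : ℕ) (hn : 0 < n) (z : Fin n → ℂ) (hz : ∀ k, z k ≠ 0)
    (h₁ : ∀ k, ‖z k - a‖ ≤ 1) (h₂ : ∀ k, ‖z k - Complex.I * a‖ ≤ 1)
    (α : ℝ) (hα : α = ⨅ k, ‖z k‖) :
    (α / Real.sqrt 2) * ∑ k, ‖z k‖ ≤ ‖∑ k, z k‖ ∧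
      ((α / Real.sqrt 2) * ∑ k, ‖z k‖ = ‖∑ k, z k‖ ↔
        ∑ k, z k = (α : ℂ) * ((1 + Complex.I) / 2) * (∑ k, (‖z k‖ : ℂ)) * a) :=
  stmt_18_general a ha n z h₁ h₂ α hα
end
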